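/- arXiv:1709.03865 — 10 statements merged into one kernel-verified Lean document; each statement's English description precedes it below -/
import Mathlib

section
/- If W is a d-dimensional subspace of R^n with d > 0, then there exists a basis {w_1,...,w_d} of W such that the support of each w_i equals the support of W (i.e., each basis vector is nonzero exactly on the set of coordinates where some vector of W is nonzero). -/
/-- If `W` is a `d`-dimensional subspace of `ℝ^n` with `d > 0`, then there is a basis
`w 1, …, w d` of `W` such that the support of each `w i` equals the support of `W`. -/
theorem stmt0 (n d : ℕ) (hd : 0 < d) (W : Submodule ℝ (Fin n → ℝ))
    (hW : Module.finrank ℝ W = d) :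
    ∃ w : Fin d → (Fin n → ℝ), (∀ i, w i ∈ W) ∧ LinearIndependent ℝ w ∧
      Submodule.span ℝ (Set.range w) = W ∧
      ∀ i, {j | w i j ≠ 0} = {j | ∃ x ∈ W, x j ≠ 0} := by
  classical
  set SuppW : Set (Fin n) := {j | ∃ x ∈ W, x j ≠ 0} with hSuppW
  -- a basis of W
  let b : Module.Basis (Fin d) ℝ W := Module.finBasisOfFinrankEq ℝ W hW
  -- a vector of W with full support
  have hex : ∃ u0 : W, ∀ j : SuppW, (u0 : Fin n → ℝ) (j : Fin n) ≠ 0 := by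
    by_contra hcon
    push_neg at hcon
    have hcover : ⋃ j : SuppW,
        ((LinearMap.ker ((LinearMap.proj (j : Fin n)).comp W.subtype) : Subspace ℝ W) : Set W)
          = Set.univ := by
      ext u0
      simp only [Set.mem_iUnion, Set.mem_univ, iff_true, SetLike.mem_coe, LinearMap.mem_ker,
        LinearMap.comp_apply, LinearMap.proj_apply]
      obtain ⟨j, hj⟩ := hcon u0
      exact ⟨j, hj⟩
    obtain ⟨j, hj⟩ := Subspace.exists_eq_top_of_iUnion_eq_univ hcover
    obtain ⟨x, hxW, hxj⟩ := j.2
    have : (⟨x, hxW⟩ : W) ∈ (⊤ : Subspace ℝ W) := trivial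
    rw [← hj] at this
    simp only [LinearMap.mem_ker, LinearMap.comp_apply, LinearMap.proj_apply] at this
    exact hxj this
  obtain ⟨u0, hu0⟩ := hex
  set u : Fin n → ℝ := (u0 : Fin n → ℝ) with hu_def
  set c : Fin d → ℝ := fun k => b.repr u0 k with hc_def
  set v : Fin d → (Fin n → ℝ) := fun i => (b i : Fin n → ℝ) with hv_def
  have hvW : ∀ i, v i ∈ W := fun i => (b i).2
  have huW : u ∈ W := u0.2
  have hv_li : LinearIndependent ℝ v :=
    b.linearIndependent.map' W.subtype (Submodule.ker_subtype W)
  -- u as a combination of the v's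
  have hu_comb : u = ∑ k, c k • v k := by
    have h1 := b.sum_repr u0
    have h2 := congrArg (W.subtype) h1
    simp only [map_sum, map_smul] at h2
    exact h2.symm
  -- choose the generic scalar s
  set B : Finset ℝ :=
    (Finset.univ.image fun p : Fin d × Fin n => -(v p.1 p.2) / u p.2) ∪ {-1 / (∑ k, c k)} with hB
  obtain ⟨s, hs⟩ := Infinite.exists_notMem_finset B
  have hs1 : ∀ i j, u j ≠ 0 → v i j + s * u j ≠ 0 := by
    intro i j huj heq
    apply hs
    rw [hB, Finset.mem_union]
    left
    rw [Finset.mem_image]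
    refine ⟨(i, j), Finset.mem_univ _, ?_⟩
    field_simp
    linarith
  have hs2 : 1 + s * ∑ k, c k ≠ 0 := by
    rcases eq_or_ne (∑ k, c k) 0 with h | h
    · rw [h]; norm_num
    · intro heq
      apply hs
      rw [hB, Finset.mem_union]
      right
      rw [Finset.mem_singleton]
      field_simp
      linarith
  -- the perturbed family
  set w : Fin d → (Fin n → ℝ) := fun i => v i + s • u with hw_def
  have hwW : ∀ i, w i ∈ W := fun i => W.add_mem (hvW i) (W.smul_mem s huW)
  -- linear independence
  have hw_li : LinearIndependent ℝ w := by
    rw [Fintype.linearIndependent_iff]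
    intro g hg
    have key : ∑ i, (g i + (∑ l, g l) * s * c i) • v i = 0 := by
      rw [← hg]
      have hsu : (s • u) = ∑ k, (s * c k) • v k := by
        rw [hu_comb, Finset.smul_sum]
        simp [smul_smul]
      calc ∑ i, (g i + (∑ l, g l) * s * c i) • v i
          = ∑ i, g i • v i + ∑ i, ((∑ l, g l) * s * c i) • v i := by
            rw [← Finset.sum_add_distrib]
            simp [add_smul]
        _ = ∑ i, g i • v i + (∑ l, g l) • ∑ i, (s * c i) • v i := by
            rw [Finset.smul_sum]
            congr 1
            refine Finset.sum_congr rfl fun i _ => ?_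
            rw [smul_smul, mul_assoc]
        _ = ∑ i, g i • v i + (∑ l, g l) • (s • u) := by rw [hsu]
        _ = ∑ i, g i • w i := by
            rw [Finset.sum_smul]
            rw [← Finset.sum_add_distrib]
            refine Finset.sum_congr rfl fun i _ => ?_
            simp [hw_def, smul_add]
    have hcoef := Fintype.linearIndependent_iff.mp hv_li _ key
    have hS : (∑ l, g l) = 0 := by
      have h3 : (∑ l, g l) * s * (∑ k, c k) = ∑ l, ((∑ l', g l') * s * c l) := by
        rw [Finset.mul_sum]
      have h4 : ∑ l, ((∑ l', g l') * s * c l) = ∑ l, (-(g l)) :=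
        Finset.sum_congr rfl fun l _ => by have := hcoef l; linarith
      have h5 : (∑ l, g l) * (1 + s * ∑ k, c k) = 0 := by
        calc (∑ l, g l) * (1 + s * ∑ k, c k)
            = (∑ l, g l) + (∑ l, g l) * s * (∑ k, c k) := by ring
          _ = (∑ l, g l) + -(∑ l, g l) := by rw [h3, h4]; simp
          _ = 0 := by ring
      rcases mul_eq_zero.mp h5 with h | h
      · exact h
      · exact absurd h hs2
    intro i
    have := hcoef i
    rw [hS] at this
    linarith
  -- span
  have hle : Submodule.span ℝ (Set.range w) ≤ W := by
    rw [Submodule.span_le]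
    rintro x ⟨i, rfl⟩
    exact hwW i
  have hspan : Submodule.span ℝ (Set.range w) = W := by
    apply Submodule.eq_of_le_of_finrank_le hle
    rw [hW, finrank_span_eq_card hw_li, Fintype.card_fin]
  refine ⟨w, hwW, hw_li, hspan, ?_⟩
  intro i
  ext j
  simp only [Set.mem_setOf_eq]
  constructor
  · intro hj
    exact ⟨w i, hwW i, hj⟩
  · intro hj
    have huj : u j ≠ 0 := hu0 ⟨j, hj⟩
    have := hs1 i j huj
    simpa [hw_def] using this
end

section
/- For every tree T, the matching number satisfies ν(T) = α(T) − null(A(T)), where α(T) is the independence number and null(A(T)) is the nullity of the adjacency matrix. -/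
open scoped Classical

open SimpleGraph Matrix

noncomputable section

variable {V : Type*}

/-- The real adjacency matrix of a simple graph. -/
def adjMat [Fintype V] (G : SimpleGraph V) : Matrix V V ℝ :=
  Matrix.of fun a b => if G.Adj a b then (1 : ℝ) else 0

/-- Support of the null space of the adjacency matrix. -/
def suppSet [Fintype V] (G : SimpleGraph V) : Set V :=
  {v | ∃ x : V → ℝ, adjMat G *ᵥ x = 0 ∧ x v ≠ 0}

/-- Core: the set of neighbors of supported vertices. -/
def coreSet [Fintype V] (G : SimpleGraph V) : Set V :=
  {v | ∃ u ∈ suppSet G, G.Adj u v}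

/-- An S-tree: a tree in which the closed neighborhood of the support is everything. -/
def IsSTree [Fintype V] (G : SimpleGraph V) : Prop :=
  G.IsTree ∧ suppSet G ∪ coreSet G = Set.univ

/-- Nullity of a graph: dimension of the kernel of its adjacency matrix. -/
def nullity [Fintype V] (G : SimpleGraph V) : ℕ :=
  Module.finrank ℝ (LinearMap.ker (adjMat G).mulVecLin)

/-- Rank of a graph: rank of its adjacency matrix. -/
def rankA [Fintype V] (G : SimpleGraph V) : ℕ :=
  (adjMat G).rank

/-- Matching number: the maximum cardinality of a matching. -/
def matchingNumber [Fintype V] (G : SimpleGraph V) : ℕ :=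
  sSup {n | ∃ M : G.Subgraph, M.IsMatching ∧ M.edgeSet.ncard = n}

/-- The set of maximum matchings. -/
def maxMatchings [Fintype V] (G : SimpleGraph V) : Set G.Subgraph :=
  {M | M.IsMatching ∧ M.edgeSet.ncard = matchingNumber G}

/-- The number of maximum matchings. -/
def numMaxMatchings [Fintype V] (G : SimpleGraph V) : ℕ :=
  (maxMatchings G).ncard

/-- Independence number. -/
def indepNumber [Fintype V] (G : SimpleGraph V) : ℕ :=
  sSup {n | ∃ s : Set V, (∀ a ∈ s, ∀ b ∈ s, ¬ G.Adj a b) ∧ s.ncard = n}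


lemma mn_bddAbove [Fintype V] (G : SimpleGraph V) :
    BddAbove {n | ∃ M : G.Subgraph, M.IsMatching ∧ M.edgeSet.ncard = n} := by
  refine ⟨Fintype.card (Sym2 V), ?_⟩
  rintro n ⟨M, _, rfl⟩
  calc M.edgeSet.ncard ≤ (Set.univ : Set (Sym2 V)).ncard :=
        Set.ncard_le_ncard (Set.subset_univ _) Set.finite_univ
  _ = _ := by rw [Set.ncard_univ, Nat.card_eq_fintype_card]

lemma mn_zero_mem [Fintype V] (G : SimpleGraph V) :
    0 ∈ {n | ∃ M : G.Subgraph, M.IsMatching ∧ M.edgeSet.ncard = n} := by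
  refine ⟨⊥, fun v hv => ?_, by simp [Subgraph.edgeSet_bot]⟩
  simp only [Subgraph.verts_bot, Set.mem_empty_iff_false] at hv

lemma exists_max_matching [Fintype V] (G : SimpleGraph V) :
    ∃ M : G.Subgraph, M.IsMatching ∧ M.edgeSet.ncard = matchingNumber G :=
  Nat.sSup_mem ⟨0, mn_zero_mem G⟩ (mn_bddAbove G)

lemma le_matchingNumber [Fintype V] (G : SimpleGraph V) {M : G.Subgraph}
    (hM : M.IsMatching) : M.edgeSet.ncard ≤ matchingNumber G :=
  le_csSup (mn_bddAbove G) ⟨M, hM, rfl⟩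

lemma in_bddAbove [Fintype V] (G : SimpleGraph V) :
    BddAbove {n | ∃ s : Set V, (∀ a ∈ s, ∀ b ∈ s, ¬ G.Adj a b) ∧ s.ncard = n} := by
  refine ⟨Fintype.card V, ?_⟩
  rintro n ⟨s, _, rfl⟩
  calc s.ncard ≤ (Set.univ : Set V).ncard :=
        Set.ncard_le_ncard (Set.subset_univ _) Set.finite_univ
  _ = _ := by rw [Set.ncard_univ, Nat.card_eq_fintype_card]

lemma in_zero_mem [Fintype V] (G : SimpleGraph V) :
    0 ∈ {n | ∃ s : Set V, (∀ a ∈ s, ∀ b ∈ s, ¬ G.Adj a b) ∧ s.ncard = n} :=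
  ⟨∅, by simp, by simp⟩

lemma exists_max_indep [Fintype V] (G : SimpleGraph V) :
    ∃ s : Set V, (∀ a ∈ s, ∀ b ∈ s, ¬ G.Adj a b) ∧ s.ncard = indepNumber G :=
  Nat.sSup_mem ⟨0, in_zero_mem G⟩ (in_bddAbove G)

lemma le_indepNumber [Fintype V] (G : SimpleGraph V) {s : Set V}
    (hs : ∀ a ∈ s, ∀ b ∈ s, ¬ G.Adj a b) : s.ncard ≤ indepNumber G :=
  le_csSup (in_bddAbove G) ⟨s, hs, rfl⟩

lemma base_case [Fintype V] (G : SimpleGraph V) (h : ∀ a b, ¬ G.Adj a b) :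
    matchingNumber G + nullity G = indepNumber G := by
  have hm : matchingNumber G = 0 := by
    refine le_antisymm ?_ (Nat.zero_le _)
    refine csSup_le ⟨0, mn_zero_mem G⟩ ?_
    rintro n ⟨M, hM, rfl⟩
    have : M.edgeSet = ∅ := by
      ext e
      induction e with
      | h a b => simp only [Subgraph.mem_edgeSet, Set.mem_empty_iff_false, iff_false]
                 exact fun hadj => h a b (M.adj_sub hadj)
    simp [this]
  have hA : adjMat G = 0 := by
    ext a b
    simp [adjMat, h a b]
  have hn : nullity G = Fintype.card V := by
    rw [nullity, hA]
    rw [Matrix.mulVecLin_zero, LinearMap.ker_zero, finrank_top,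
      Module.finrank_fintype_fun_eq_card]
  have hi : indepNumber G = Fintype.card V := by
    refine le_antisymm ?_ ?_
    · refine csSup_le ⟨0, in_zero_mem G⟩ ?_
      rintro n ⟨s, _, rfl⟩
      calc s.ncard ≤ (Set.univ : Set V).ncard :=
            Set.ncard_le_ncard (Set.subset_univ _) Set.finite_univ
      _ = _ := by rw [Set.ncard_univ, Nat.card_eq_fintype_card]
    · refine le_csSup (in_bddAbove G) ⟨Set.univ, fun a _ b _ => h a b, ?_⟩
      rw [Set.ncard_univ, Nat.card_eq_fintype_card]
  omega

lemma exists_leaf [Fintype V] (G : SimpleGraph V) (hA : G.IsAcyclic)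
    (h : ∃ a b, G.Adj a b) : ∃ u v, G.Adj u v ∧ ∀ w, G.Adj v w → w = u := by
  classical
  set P : Set ℕ := {n | ∃ (a b : V) (p : G.Walk a b), p.IsPath ∧ p.length = n} with hP
  have hbdd : BddAbove P := by
    refine ⟨Fintype.card V, ?_⟩
    rintro n ⟨a, b, p, hp, rfl⟩
    exact le_of_lt hp.length_lt
  obtain ⟨a0, b0, hab⟩ := h
  have h1P : 1 ∈ P := by
    refine ⟨a0, b0, Walk.cons hab Walk.nil, ?_, rfl⟩
    refine Walk.IsPath.nil.cons ?_
    simp [hab.ne]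
  have hNmem : sSup P ∈ P := Nat.sSup_mem ⟨1, h1P⟩ hbdd
  have hN1 : 1 ≤ sSup P := le_csSup hbdd h1P
  obtain ⟨a, b, p, hp, hlen⟩ := hNmem
  cases p with
  | nil => simp at hlen; omega
  | @cons _ c _ hac q =>
    refine ⟨c, a, hac.symm, fun w hw => ?_⟩
    by_cases hws : w ∈ (Walk.cons hac q).support
    · -- use path uniqueness
      have huniq := isAcyclic_iff_path_unique.mp hA
        (⟨(Walk.cons hac q).takeUntil w hws, hp.takeUntil hws⟩ : G.Path a w)
        (⟨Walk.cons hw Walk.nil, Walk.IsPath.nil.cons (by simp [hw.ne])⟩ : G.Path a w)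
      have htake : (Walk.cons hac q).takeUntil w hws = Walk.cons hw Walk.nil :=
        congrArg Subtype.val huniq
      have hspec := (Walk.cons hac q).take_spec hws
      rw [htake] at hspec
      have hsup := congrArg Walk.support hspec
      rw [Walk.support_append, Walk.support_cons, Walk.support_cons] at hsup
      simp only [Walk.support_nil] at hsup
      have : w = c := by
        have h2 := congrArg List.tail hsup
        simp only [List.tail_cons] at h2
        rw [Walk.support_eq_cons q] at h2
        rw [Walk.support_eq_cons ((Walk.cons hac q).dropUntil w hws)] at h2
        exact (List.cons.injEq _ _ _ _ ▸ h2).1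
      exact this
    · exfalso
      have hp' : (Walk.cons hw.symm (Walk.cons hac q)).IsPath := hp.cons hws
      have : (Walk.cons hac q).length + 1 ∈ P := ⟨w, b, _, hp', by simp⟩
      have hle := le_csSup hbdd this
      omega

lemma adj_row [Fintype V] (G : SimpleGraph V) (x : V → ℝ) (w : V) :
    ((adjMat G).mulVecLin x) w = ∑ j, if G.Adj w j then x j else 0 := by
  simp [adjMat, Matrix.mulVecLin_apply, Matrix.mulVec, dotProduct, ite_mul]

lemma edgeSet_map' {W : Type*} {G : SimpleGraph V} {G' : SimpleGraph W} (f : G →g G')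
    (M : G.Subgraph) : (M.map f).edgeSet = Sym2.map f '' M.edgeSet := by
  ext e
  induction e with
  | h a b =>
    simp only [Subgraph.mem_edgeSet, Subgraph.map_adj, Relation.Map, Set.mem_image]
    constructor
    · rintro ⟨x, y, h, rfl, rfl⟩
      exact ⟨s(x, y), h, rfl⟩
    · rintro ⟨e', he', hmap⟩
      induction e' with
      | h x y =>
        rw [Sym2.map_pair_eq, Sym2.eq_iff] at hmap
        simp only [Subgraph.mem_edgeSet] at he'
        rcases hmap with ⟨rfl, rfl⟩ | ⟨rfl, rfl⟩
        · exact ⟨x, y, he', rfl, rfl⟩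
        · exact ⟨y, x, he'.symm, rfl, rfl⟩

lemma edgeSet_map_ncard {W : Type*} {G : SimpleGraph V} {G' : SimpleGraph W} (f : G →g G')
    (hf : Function.Injective f) (M : G.Subgraph) :
    (M.map f).edgeSet.ncard = M.edgeSet.ncard := by
  rw [edgeSet_map', Set.ncard_image_of_injective _ (Sym2.map.injective hf)]

section transfer
variable [Fintype V] {G : SimpleGraph V} {u v : V}

lemma sum_split (huv : u ≠ v) (g : V → ℝ) :
    ∑ w, g w = g u + g v +
      ∑ w : ((⊤ : G.Subgraph).deleteVerts {u, v}).verts, g ↑w := by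
  have hS : ((⊤ : G.Subgraph).deleteVerts {u, v}).verts.toFinset
      = Finset.univ \ {u, v} := by
    ext w; simp
  rw [Finset.sum_set_coe, hS]
  have hsub : ({u, v} : Finset V) ⊆ Finset.univ := Finset.subset_univ _
  rw [← Finset.sum_sdiff hsub, Finset.sum_pair huv]
  ring

lemma nullity_transfer (huv : G.Adj u v) (hleaf : ∀ w, G.Adj v w → w = u) :
    nullity G = nullity ((⊤ : G.Subgraph).deleteVerts {u, v}).coe := by
  set S := ((⊤ : G.Subgraph).deleteVerts {u, v}).verts with hSdef
  set G₂ := ((⊤ : G.Subgraph).deleteVerts {u, v}).coe with hG2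
  have hne : u ≠ v := huv.ne
  have huS : u ∉ S := by simp [hSdef]
  have hvS : v ∉ S := by simp [hSdef]
  have hmemS : ∀ w : V, w ≠ u → w ≠ v → w ∈ S := by
    intro w h1 h2; simp [hSdef, h1, h2]
  have hadj₂ : ∀ a b : S, G₂.Adj a b ↔ G.Adj ↑a ↑b := by
    rintro ⟨a, ha⟩ ⟨b, hb⟩
    simp only [hG2, Subgraph.coe_adj, Subgraph.deleteVerts_adj]
    constructor
    · rintro ⟨-, -, -, -, h⟩; exact h
    · intro h
      have ha' := ha; have hb' := hb
      simp only [hSdef, Subgraph.deleteVerts_verts, Subgraph.verts_top,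
        Set.mem_diff, Set.mem_univ, true_and] at ha' hb'
      exact ⟨trivial, ha', trivial, hb', h⟩
  have hadjv : ∀ w, G.Adj w v ↔ w = u := by
    intro w
    constructor
    · intro h; exact hleaf w h.symm
    · rintro rfl; exact huv
  -- key row computations
  have rowv : ∀ x : V → ℝ, (adjMat G).mulVecLin x = 0 → x u = 0 := by
    intro x hx
    have h0 : ((adjMat G).mulVecLin x) v = 0 := by rw [hx]; rfl
    rw [adj_row] at h0
    rw [Finset.sum_eq_single u (fun b _ hb => by
      simp only [ite_eq_right_iff]
      intro hadj; exact absurd (hleaf b hadj) hb) (by simp)] at h0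
    simpa [huv.symm] using h0
  -- restriction map
  have hres : ∀ x : V → ℝ, (adjMat G).mulVecLin x = 0 →
      (adjMat G₂).mulVecLin (fun w : S => x ↑w) = 0 := by
    intro x hx
    funext w
    rw [adj_row]
    have hxu : x u = 0 := rowv x hx
    have h0 : ((adjMat G).mulVecLin x) ↑w = 0 := by rw [hx]; rfl
    rw [adj_row, sum_split (G := G) hne] at h0
    have hwv : ¬ G.Adj ↑w v := fun h => huS ((hadjv _).mp h ▸ w.2)
    simp only [Pi.zero_apply]
    have hsum2 : (∑ j : S, if G₂.Adj w j then x ↑j else 0)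
        = ∑ j : S, if G.Adj ↑w ↑j then x ↑j else 0 :=
      Finset.sum_congr rfl (fun j _ => by simp only [hadj₂])
    refine Eq.trans ?_ (show (∑ j : S, if G.Adj ↑w ↑j then x ↑j else 0) = 0 from ?_)
    · convert hsum2
    simp only [hwv, if_false, hxu, ite_self, if_neg] at h0
    simpa using h0
  -- row at u
  have rowu : ∀ x : V → ℝ, (adjMat G).mulVecLin x = 0 →
      x v = -(∑ j : S, if G.Adj u ↑j then x ↑j else 0) := by
    intro x hx
    have h0 : ((adjMat G).mulVecLin x) u = 0 := by rw [hx]; rfl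
    rw [adj_row, sum_split (G := G) hne] at h0
    simp only [G.irrefl, if_false, huv, if_true] at h0
    linarith
  -- extension map
  set extMap : (S → ℝ) → (V → ℝ) := fun y w =>
    if hw : w ∈ S then y ⟨w, hw⟩
    else if w = v then -(∑ j : S, if G.Adj u ↑j then y j else 0) else 0 with hextMap
  have hextS : ∀ (y : S → ℝ) (j : S), extMap y ↑j = y j := by
    intro y j
    simp only [hextMap]
    rw [dif_pos j.2]
  have hextu : ∀ y : S → ℝ, extMap y u = 0 := by
    intro y
    simp only [hextMap]
    rw [dif_neg huS, if_neg hne]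
  have hextv : ∀ y : S → ℝ, extMap y v = -(∑ j : S, if G.Adj u ↑j then y j else 0) := by
    intro y
    simp only [hextMap]
    rw [dif_neg hvS]
    simp
  have hext : ∀ y : S → ℝ, (adjMat G₂).mulVecLin y = 0 →
      (adjMat G).mulVecLin (extMap y) = 0 := by
    intro y hy
    funext w
    rw [adj_row, sum_split (G := G) hne]
    simp only [Pi.zero_apply]
    have hsum : ∀ w' : V, (∑ j : S, if G.Adj w' ↑j then extMap y ↑j else 0)
        = ∑ j : S, if G.Adj w' ↑j then y j else 0 :=
      fun w' => Finset.sum_congr rfl (fun j _ => by rw [hextS])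
    by_cases hw : w ∈ S
    · have hwv : ¬ G.Adj w v := fun h => huS ((hadjv _).mp h ▸ hw)
      have h2 : ((adjMat G₂).mulVecLin y) ⟨w, hw⟩ = 0 := by rw [hy]; rfl
      rw [adj_row] at h2
      have h3 : (∑ j : S, if G₂.Adj ⟨w, hw⟩ j then y j else 0)
          = ∑ j : S, if G.Adj w ↑j then y j else 0 :=
        Finset.sum_congr rfl (fun j _ => by simp only [hadj₂])
      replace h2 : (∑ j : S, if G.Adj w ↑j then y j else 0) = 0 := by rw [← h3]; convert h2
      rw [hsum, h2]
      simp [hwv, hextu]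
    · rcases (show w = u ∨ w = v from by
        by_contra hc; push_neg at hc; exact hw (hmemS w hc.1 hc.2)) with hwu | hwv
      · rw [hwu, hsum, hextv, hextu]
        simp [huv]
      · rw [hwv, hsum]
        have hs0 : (∑ j : S, if G.Adj v ↑j then y j else 0) = 0 :=
          Finset.sum_eq_zero (fun j _ => by
            rw [if_neg]
            exact fun h => huS ((hleaf ↑j h) ▸ j.2))
        rw [hs0, hextu]
        simp [SimpleGraph.irrefl]
  -- the linear equivalence between kernels
  have e : LinearMap.ker (adjMat G).mulVecLin ≃ₗ[ℝ] LinearMap.ker (adjMat G₂).mulVecLin :=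
    { toFun := fun x => ⟨fun w : S => x.1 ↑w,
        LinearMap.mem_ker.mpr (hres x.1 (LinearMap.mem_ker.mp x.2))⟩
      map_add' := fun x y => rfl
      map_smul' := fun c x => rfl
      invFun := fun y => ⟨extMap y.1,
        LinearMap.mem_ker.mpr (hext y.1 (LinearMap.mem_ker.mp y.2))⟩
      left_inv := by
        rintro ⟨x, hx⟩
        have hx' := LinearMap.mem_ker.mp hx
        apply Subtype.ext
        funext w
        simp only
        by_cases hw : w ∈ S
        · exact hextS _ ⟨w, hw⟩
        · rcases (show w = u ∨ w = v from by
            by_contra hc; push_neg at hc; exact hw (hmemS w hc.1 hc.2)) with hwu | hwv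
          · rw [hwu]
            exact (hextu _).trans (rowv x hx').symm
          · rw [hwv]
            exact (hextv _).trans (rowu x hx').symm
      right_inv := by
        rintro ⟨y, hy⟩
        apply Subtype.ext
        funext j
        exact hextS y j }
  exact e.finrank_eq

end transfer

section transfer2
variable [Fintype V] {G : SimpleGraph V} {u v : V}

lemma delete_pair_matching {M : G.Subgraph} (hM : M.IsMatching) {a b : V} (hab : M.Adj a b) :
    (M.deleteVerts {a, b}).IsMatching ∧
      (M.deleteVerts {a, b}).edgeSet = M.edgeSet \ {s(a, b)} := by
  have hne : a ≠ b := (M.adj_sub hab).ne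
  have pa : ∀ y, M.Adj a y → y = b := by
    intro y hy
    obtain ⟨w, hw1, hw2⟩ := hM (M.edge_vert hab)
    rw [hw2 y hy, hw2 b hab]
  have pb : ∀ y, M.Adj b y → y = a := by
    intro y hy
    obtain ⟨w, hw1, hw2⟩ := hM (M.edge_vert hab.symm)
    rw [hw2 y hy, hw2 a hab.symm]
  constructor
  · rintro c ⟨hc, hcab⟩
    simp only [Set.mem_insert_iff, Set.mem_singleton_iff, not_or] at hcab
    obtain ⟨w, hw1, hw2⟩ := hM hc
    have hwa : w ≠ a := fun h => hcab.2 (pa c (h ▸ hw1).symm)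
    have hwb : w ≠ b := fun h => hcab.1 (pb c (h ▸ hw1).symm)
    refine ⟨w, ?_, fun y hy => hw2 y ?_⟩
    · show (M.deleteVerts {a, b}).Adj c w
      rw [Subgraph.deleteVerts_adj]
      exact ⟨hc, by simp [hcab.1, hcab.2], M.edge_vert hw1.symm, by simp [hwa, hwb], hw1⟩
    · have hy' : (M.deleteVerts {a, b}).Adj c y := hy
      rw [Subgraph.deleteVerts_adj] at hy'
      exact hy'.2.2.2.2
  · ext e
    induction e with
    | h x y =>
      simp only [Subgraph.mem_edgeSet, Subgraph.deleteVerts_adj, Set.mem_diff,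
        Set.mem_singleton_iff, Set.mem_insert_iff, not_or]
      constructor
      · rintro ⟨hx, ⟨hxa, hxb⟩, hy, ⟨hya, hyb⟩, hadj⟩
        refine ⟨hadj, fun h => ?_⟩
        rw [Sym2.eq_iff] at h
        rcases h with ⟨rfl, rfl⟩ | ⟨rfl, rfl⟩
        · exact hxa rfl
        · exact hxb rfl
      · rintro ⟨hadj, hne'⟩
        have hxa : x ≠ a := by
          rintro rfl
          exact hne' (by rw [pa y hadj])
        have hxb : x ≠ b := by
          rintro rfl
          rw [pb y hadj] at hne'
          exact hne' (Sym2.eq_swap)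
        have hya : y ≠ a := by
          rintro rfl
          exact hxb (pa x hadj.symm)
        have hyb : y ≠ b := by
          rintro rfl
          exact hxa (pb x hadj.symm)
        exact ⟨M.edge_vert hadj, ⟨hxa, hxb⟩, M.edge_vert hadj.symm, ⟨hya, hyb⟩, hadj⟩

lemma restrict_matching (huv : G.Adj u v) {N : G.Subgraph} (hN : N.IsMatching)
    (hsub : N.verts ⊆ ((⊤ : G.Subgraph).deleteVerts {u, v}).verts) :
    ∃ N₂ : ((⊤ : G.Subgraph).deleteVerts {u, v}).coe.Subgraph,
      N₂.IsMatching ∧ N₂.edgeSet.ncard = N.edgeSet.ncard := by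
  set H := (⊤ : G.Subgraph).deleteVerts {u, v} with hH
  have hNH : N ≤ H := by
    constructor
    · exact hsub
    · intro a b hab
      have ha := hsub (N.edge_vert hab)
      have hb := hsub (N.edge_vert hab.symm)
      simp only [hH, Subgraph.deleteVerts_verts, Subgraph.verts_top, Set.mem_diff,
        Set.mem_univ, true_and] at ha hb
      rw [Subgraph.deleteVerts_adj]
      exact ⟨trivial, ha, trivial, hb, N.adj_sub hab⟩
  refine ⟨Subgraph.restrict (G' := H) N, ?_, ?_⟩
  · intro a ha
    have ha' : (↑a : V) ∈ N.verts := ha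
    obtain ⟨w, hw1, hw2⟩ := hN ha'
    have hwH : w ∈ H.verts := hsub (N.edge_vert hw1.symm)
    refine ⟨⟨w, hwH⟩, ⟨?_, hw1⟩, fun y hy => ?_⟩
    · exact hNH.2 hw1
    · exact Subtype.ext (hw2 ↑y hy.2)
  · have hcoe : Subgraph.coeSubgraph (G' := H) (Subgraph.restrict (G' := H) N) = N := by
      rw [Subgraph.coeSubgraph_restrict_eq]
      exact inf_eq_right.mpr hNH
    conv_rhs => rw [← hcoe]
    exact (edgeSet_map_ncard H.hom Subtype.val_injective _).symm

lemma mn_ge (huv : G.Adj u v) :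
    matchingNumber ((⊤ : G.Subgraph).deleteVerts {u, v}).coe + 1 ≤ matchingNumber G := by
  set H := (⊤ : G.Subgraph).deleteVerts {u, v} with hH
  obtain ⟨M₂, hM₂, hcard⟩ := exists_max_matching H.coe
  have hdisj : Disjoint (H.coeSubgraph M₂).support (G.subgraphOfAdj huv).support := by
    rw [support_subgraphOfAdj]
    rw [Set.disjoint_right]
    intro x hx hx'
    have h1 : x ∈ (H.coeSubgraph M₂).verts := (H.coeSubgraph M₂).support_subset_verts hx'
    rw [Subgraph.verts_coeSubgraph] at h1
    have h2 : x ∈ H.verts := Subtype.coe_image_subset _ _ h1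
    simp only [hH, Subgraph.deleteVerts_verts, Subgraph.verts_top, Set.mem_diff] at h2
    exact h2.2 hx
  have hmatch : ((H.coeSubgraph M₂) ⊔ G.subgraphOfAdj huv).IsMatching :=
    Subgraph.IsMatching.sup hM₂.coeSubgraph (Subgraph.IsMatching.subgraphOfAdj huv) hdisj
  have hedge : ((H.coeSubgraph M₂) ⊔ G.subgraphOfAdj huv).edgeSet.ncard
      = matchingNumber H.coe + 1 := by
    rw [Subgraph.edgeSet_sup, edgeSet_subgraphOfAdj]
    rw [Set.ncard_union_eq ?disj (Set.toFinite _) (Set.toFinite _)]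
    · rw [Set.ncard_singleton, edgeSet_map_ncard H.hom Subtype.val_injective, hcard]
    case disj =>
      rw [Set.disjoint_singleton_right]
      intro hmem
      rw [Subgraph.mem_edgeSet, Subgraph.coeSubgraph_adj] at hmem
      obtain ⟨hu', -, -⟩ := hmem
      simp [hH] at hu'
  calc matchingNumber H.coe + 1 = _ := hedge.symm
  _ ≤ matchingNumber G := le_matchingNumber G hmatch

lemma one_le_mn (huv : G.Adj u v) : 1 ≤ matchingNumber G := by
  have h := le_matchingNumber G (Subgraph.IsMatching.subgraphOfAdj huv)
  rwa [edgeSet_subgraphOfAdj, Set.ncard_singleton] at h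

lemma mn_le (huv : G.Adj u v) (hleaf : ∀ w, G.Adj v w → w = u) :
    matchingNumber G ≤ matchingNumber ((⊤ : G.Subgraph).deleteVerts {u, v}).coe + 1 := by
  set H := (⊤ : G.Subgraph).deleteVerts {u, v} with hH
  obtain ⟨M, hM, hcard⟩ := exists_max_matching G
  have hverts_mem : ∀ c ∈ M.verts, c ≠ u → c ≠ v → c ∈ H.verts := by
    intro c _ h1 h2
    simp [hH, h1, h2]
  by_cases hv : v ∈ M.verts
  · obtain ⟨w, hw1, hw2⟩ := hM hv
    have hMvu : M.Adj v u := (hleaf w (M.adj_sub hw1)) ▸ hw1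
    obtain ⟨hmatch, hedge⟩ := delete_pair_matching hM hMvu
    have hsub : (M.deleteVerts {v, u}).verts ⊆ H.verts := by
      rintro c ⟨hc1, hc2⟩
      simp only [Set.mem_insert_iff, Set.mem_singleton_iff, not_or] at hc2
      exact hverts_mem c hc1 hc2.2 hc2.1
    obtain ⟨N₂, hN₂, hN₂card⟩ := restrict_matching huv hmatch hsub
    have h1 : (M.deleteVerts {v, u}).edgeSet.ncard = matchingNumber G - 1 := by
      rw [hedge, Set.ncard_diff (by simpa using hMvu) (Set.toFinite _), Set.ncard_singleton,
        hcard]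
    have h2 := le_matchingNumber H.coe hN₂
    rw [hN₂card, h1] at h2
    have := one_le_mn huv
    omega
  · by_cases hu : u ∈ M.verts
    · obtain ⟨w, hw1, hw2⟩ := hM hu
      have hwv : w ≠ v := fun h => hv (h ▸ M.edge_vert hw1.symm)
      obtain ⟨hmatch, hedge⟩ := delete_pair_matching hM hw1
      have hsub : (M.deleteVerts {u, w}).verts ⊆ H.verts := by
        rintro c ⟨hc1, hc2⟩
        simp only [Set.mem_insert_iff, Set.mem_singleton_iff, not_or] at hc2
        exact hverts_mem c hc1 hc2.1 (fun h => hv (h ▸ hc1))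
      obtain ⟨N₂, hN₂, hN₂card⟩ := restrict_matching huv hmatch hsub
      have h1 : (M.deleteVerts {u, w}).edgeSet.ncard = matchingNumber G - 1 := by
        rw [hedge, Set.ncard_diff (by simpa using hw1) (Set.toFinite _), Set.ncard_singleton,
          hcard]
      have h2 := le_matchingNumber H.coe hN₂
      rw [hN₂card, h1] at h2
      have := one_le_mn huv
      omega
    · have hsub : M.verts ⊆ H.verts := by
        intro c hc
        exact hverts_mem c hc (fun h => hu (h ▸ hc)) (fun h => hv (h ▸ hc))
      obtain ⟨N₂, hN₂, hN₂card⟩ := restrict_matching huv hM hsub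
      have h2 := le_matchingNumber H.coe hN₂
      rw [hN₂card, hcard] at h2
      omega

end transfer2

section transfer3
variable [Fintype V] {G : SimpleGraph V} {u v : V}

lemma indep_ge (huv : G.Adj u v) (hleaf : ∀ w, G.Adj v w → w = u) :
    indepNumber ((⊤ : G.Subgraph).deleteVerts {u, v}).coe + 1 ≤ indepNumber G := by
  set H := (⊤ : G.Subgraph).deleteVerts {u, v} with hH
  obtain ⟨s₂, hs₂, hcard⟩ := exists_max_indep H.coe
  have hnotin : ∀ a : H.verts, (↑a : V) ≠ u ∧ (↑a : V) ≠ v := by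
    intro a
    have := a.2
    simp only [hH, Subgraph.deleteVerts_verts, Subgraph.verts_top, Set.mem_diff,
      Set.mem_univ, true_and, Set.mem_insert_iff, Set.mem_singleton_iff, not_or] at this
    exact this
  have hindep : ∀ a ∈ ((↑) '' s₂ ∪ {v} : Set V), ∀ b ∈ ((↑) '' s₂ ∪ {v} : Set V),
      ¬ G.Adj a b := by
    rintro a (⟨a', ha', rfl⟩ | ha) b (⟨b', hb', rfl⟩ | hb) hadj
    · refine hs₂ a' ha' b' hb' ?_
      rw [Subgraph.coe_adj, Subgraph.deleteVerts_adj]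
      refine ⟨trivial, ?_, trivial, ?_, hadj⟩ <;> simp [(hnotin a').1, (hnotin a').2,
        (hnotin b').1, (hnotin b').2]
    · rw [Set.mem_singleton_iff] at hb; subst hb
      exact (hnotin a').1 (hleaf _ hadj.symm)
    · rw [Set.mem_singleton_iff] at ha; subst ha
      exact (hnotin b').1 (hleaf _ hadj)
    · rw [Set.mem_singleton_iff] at ha hb; subst ha; subst hb
      exact G.irrefl hadj
  have hle := le_indepNumber G hindep
  rw [Set.ncard_union_eq ?dv (Set.toFinite _) (Set.toFinite _)] at hle
  · rw [Set.ncard_image_of_injective _ Subtype.val_injective, Set.ncard_singleton, hcard] at hle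
    exact hle
  case dv =>
    rw [Set.disjoint_singleton_right]
    rintro ⟨a', -, ha'⟩
    exact (hnotin a').2 ha'

lemma indep_le (huv : G.Adj u v) :
    indepNumber G ≤ indepNumber ((⊤ : G.Subgraph).deleteVerts {u, v}).coe + 1 := by
  set H := (⊤ : G.Subgraph).deleteVerts {u, v} with hH
  obtain ⟨s, hs, hcard⟩ := exists_max_indep G
  set s₂ : Set H.verts := {a | (↑a : V) ∈ s} with hs₂def
  have hs₂ : ∀ a ∈ s₂, ∀ b ∈ s₂, ¬ H.coe.Adj a b := by
    intro a ha b hb hadj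
    rw [Subgraph.coe_adj, Subgraph.deleteVerts_adj] at hadj
    exact hs ↑a ha ↑b hb hadj.2.2.2.2
  have himg : Subtype.val '' s₂ = s ∩ H.verts := by
    ext x
    simp only [Set.mem_image, Set.mem_inter_iff, hs₂def, Set.mem_setOf_eq]
    constructor
    · rintro ⟨a, ha, rfl⟩; exact ⟨ha, a.2⟩
    · rintro ⟨hx, hx'⟩; exact ⟨⟨x, hx'⟩, hx, rfl⟩
  have h1 : s₂.ncard = (s ∩ H.verts).ncard := by
    rw [← himg, Set.ncard_image_of_injective _ Subtype.val_injective]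
  have h2 : s \ {u, v} ⊆ s ∩ H.verts := by
    rintro x ⟨hx, hx'⟩
    simp only [Set.mem_insert_iff, Set.mem_singleton_iff, not_or] at hx'
    refine ⟨hx, ?_⟩
    simp [hH, hx'.1, hx'.2]
  have h3 : s.ncard ≤ (s \ {u, v}).ncard + 1 := by
    by_cases hu : u ∈ s
    · have hvs : v ∉ s := fun hvs => hs u hu v hvs huv
      have : s \ {u, v} = s \ {u} := by
        ext x
        simp only [Set.mem_diff, Set.mem_insert_iff, Set.mem_singleton_iff, not_or]
        exact ⟨fun ⟨h, h'⟩ => ⟨h, h'.1⟩, fun ⟨h, h'⟩ => ⟨h, h', fun hv' => hvs (hv' ▸ h)⟩⟩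
      rw [this, Set.ncard_diff_singleton_add_one hu (Set.toFinite _)]
    · by_cases hva : v ∈ s
      · have : s \ {u, v} = s \ {v} := by
          ext x
          simp only [Set.mem_diff, Set.mem_insert_iff, Set.mem_singleton_iff, not_or]
          exact ⟨fun ⟨h, h'⟩ => ⟨h, h'.2⟩, fun ⟨h, h'⟩ => ⟨h, fun hu' => hu (hu' ▸ h), h'⟩⟩
        rw [this, Set.ncard_diff_singleton_add_one hva (Set.toFinite _)]
      · have : s \ {u, v} = s := by
          ext x
          simp only [Set.mem_diff, Set.mem_insert_iff, Set.mem_singleton_iff, not_or]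
          exact ⟨fun ⟨h, _⟩ => h, fun h => ⟨h, fun h' => hu (h' ▸ h), fun h' => hva (h' ▸ h)⟩⟩
        rw [this]; omega
  have h4 := le_indepNumber H.coe hs₂
  have h5 := Set.ncard_le_ncard h2 (Set.toFinite _)
  omega

end transfer3

lemma coe_acyclic [Fintype V] {G : SimpleGraph V} (hacyc : G.IsAcyclic) (s : Set V) :
    ((⊤ : G.Subgraph).deleteVerts s).coe.IsAcyclic := by
  intro w c hc
  set H := (⊤ : G.Subgraph).deleteVerts s
  have hinj : Function.Injective H.hom := Subtype.val_injective
  exact hacyc (c.map H.hom) (hc.map hinj)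

lemma card_coe [Fintype V] {G : SimpleGraph V} {u v : V} (hne : u ≠ v) :
    Fintype.card ((⊤ : G.Subgraph).deleteVerts {u, v}).verts + 2 = Fintype.card V := by
  rw [← Set.toFinset_card]
  have hS : ((⊤ : G.Subgraph).deleteVerts {u, v}).verts.toFinset
      = Finset.univ \ {u, v} := by
    ext w; simp
  rw [hS, Finset.card_sdiff_of_subset (Finset.subset_univ _), Finset.card_univ, Finset.card_pair hne]
  have : ({u, v} : Finset V).card ≤ Fintype.card V := Finset.card_le_univ _
  have h2 : 2 ≤ Fintype.card V := by
    rw [← Finset.card_pair hne]; exact Finset.card_le_univ _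
  omega

lemma key_induction : ∀ (n : ℕ) (W : Type u) [Fintype W] (G : SimpleGraph W),
    Fintype.card W ≤ n → G.IsAcyclic →
    matchingNumber G + nullity G = indepNumber G := by
  intro n
  induction n with
  | zero =>
    intro W _ G hcard _
    have hempty : IsEmpty W := by
      rw [← Fintype.card_eq_zero_iff]; omega
    exact base_case G (fun a _ => (hempty.false a).elim)
  | succ n ih =>
    intro W _ G hcard hacyc
    by_cases h : ∃ a b, G.Adj a b
    · obtain ⟨u, v, huv, hleaf⟩ := exists_leaf G hacyc h
      have hcard₂ : Fintype.card ((⊤ : G.Subgraph).deleteVerts {u, v}).verts ≤ n := by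
        have := card_coe (G := G) huv.ne
        omega
      have hacyc₂ : ((⊤ : G.Subgraph).deleteVerts {u, v}).coe.IsAcyclic :=
        coe_acyclic hacyc {u, v}
      have hIH := ih ((⊤ : G.Subgraph).deleteVerts {u, v}).verts
        ((⊤ : G.Subgraph).deleteVerts {u, v}).coe hcard₂ hacyc₂
      have e1 := mn_ge huv
      have e2 := mn_le huv hleaf
      have e3 := nullity_transfer huv hleaf
      have e4 := indep_ge huv hleaf
      have e5 := indep_le huv
      omega
    · push_neg at h
      exact base_case G h

/-- For every tree `T`, `ν(T) = α(T) − null(A(T))`. -/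
theorem stmt3 [Fintype V] (G : SimpleGraph V) (hT : G.IsTree) :
    matchingNumber G = indepNumber G - nullity G := by
  have h := key_induction (Fintype.card V) V G le_rfl hT.IsAcyclic
  omega
end
end

section
/- Let T be a tree on n labeled vertices and let *T = *(k_1,...,k_n)T be the stellare of T obtained by attaching k_i ≥ 2 new pendant vertices to vertex i for each i. Then *T is an S-tree, Core(*T) = V(T), and Supp(*T) = V(*T) \ V(T). -/
open scoped Classical

open SimpleGraph Matrix

noncomputable section

variable {V : Type*}

/-- `G` is the stellare `*(k₁,…,kₙ)T` of `T`: `f` embeds the vertices of `T`, and for each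
vertex `i` of `T`, `P i` is the set of `k i ≥ 2` new pendant vertices attached to `f i`. -/
structure IsStellare {W : Type*} [Fintype V] [Fintype W]
    (T : SimpleGraph V) (G : SimpleGraph W) (f : V → W) (P : V → Finset W) (k : V → ℕ) :
    Prop where
  f_inj : Function.Injective f
  card_P : ∀ i, (P i).card = k i
  two_le : ∀ i, 2 ≤ k i
  disj : ∀ i j, i ≠ j → Disjoint (P i) (P j)
  not_mem : ∀ i j, f i ∉ P j
  cover : ∀ w : W, (∃ i, w = f i) ∨ (∃ i, w ∈ P i)
  adj_ff : ∀ u v, G.Adj (f u) (f v) ↔ T.Adj u v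
  adj_pend : ∀ i w, w ∈ P i → ∀ x, G.Adj w x ↔ x = f i

/-- Any stellare `*T` of a tree `T` is an S-tree, with `Core(*T) = V(T)` and
`Supp(*T) = V(*T) \ V(T)`. -/
theorem stmt4 {W : Type*} [Fintype V] [Fintype W] (T : SimpleGraph V) (G : SimpleGraph W)
    (f : V → W) (P : V → Finset W) (k : V → ℕ)
    (hT : T.IsTree) (hst : IsStellare T G f P k) :
    IsSTree G ∧ coreSet G = Set.range f ∧ suppSet G = (Set.range f)ᶜ := by
  classical
  obtain ⟨hf, hcard, h2, hdisj, hnm, hcov, hff, hpend⟩ := hst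
  -- every pendant set is nonempty
  have hPne : ∀ i, (P i).Nonempty := fun i =>
    Finset.card_pos.mp (by rw [hcard]; exact lt_of_lt_of_le (by norm_num) (h2 i))
  -- pendant vertices are not images of f
  have hpnf : ∀ {i w}, w ∈ P i → w ∉ Set.range f := by
    rintro i w hw ⟨j, rfl⟩
    exact hnm j i hw
  -- adjacency of a vertex with a pendant
  have hpend' : ∀ {i w}, w ∈ P i → ∀ x, G.Adj x w ↔ x = f i := by
    intro i w hw x
    rw [adj_comm]; exact hpend i w hw x
  -- the retraction r : W → V
  have hr : ∀ w : W, ∃ i : V, w = f i ∨ w ∈ P i := by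
    intro w
    rcases hcov w with ⟨i, h⟩ | ⟨i, h⟩
    · exact ⟨i, Or.inl h⟩
    · exact ⟨i, Or.inr h⟩
  set r : W → V := fun w => (hr w).choose with hrdef
  have hrspec : ∀ w : W, w = f (r w) ∨ w ∈ P (r w) := fun w => (hr w).choose_spec
  have hrf : ∀ i, r (f i) = i := by
    intro i
    rcases hrspec (f i) with h | h
    · exact (hf h).symm
    · exact absurd h (hnm i _)
  have hrP : ∀ {i w}, w ∈ P i → r w = i := by
    intro i w hw
    rcases hrspec w with h | h
    · exact absurd (h ▸ hw) (hnm _ _)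
    · by_contra hne
      exact (Finset.disjoint_left.mp (hdisj _ _ hne) h) hw
  -- f i is never in the support
  have hfnsupp : ∀ i, f i ∉ suppSet G := by
    rintro i ⟨x, hx, hxne⟩
    obtain ⟨w, hw⟩ := hPne i
    have hrow : (adjMat G *ᵥ x) w = x (f i) := by
      simp only [adjMat, Matrix.mulVec, dotProduct, Matrix.of_apply]
      rw [Finset.sum_eq_single (f i)]
      · simp [hpend i w hw]
      · intro b _ hb
        simp [hpend i w hw, hb]
      · simp
    rw [hx] at hrow
    exact hxne hrow.symm
  -- every pendant vertex is in the support
  have hpsupp : ∀ {i w}, w ∈ P i → w ∈ suppSet G := by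
    intro i w hw
    obtain ⟨w', hw', hwne⟩ := Finset.exists_mem_ne
      (by rw [hcard]; exact lt_of_lt_of_le (by norm_num) (h2 i)) w
    refine ⟨Pi.single w 1 - Pi.single w' 1, ?_, ?_⟩
    · rw [Matrix.mulVec_sub, Matrix.mulVec_single, Matrix.mulVec_single]
      funext u
      have h1 : G.Adj u w ↔ u = f i := hpend' hw u
      have h2' : G.Adj u w' ↔ u = f i := hpend' hw' u
      simp [adjMat, h1, h2']
    · simp [Pi.single_apply, hwne]
  -- support = complement of range f
  have hsupp : suppSet G = (Set.range f)ᶜ := by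
    ext w
    constructor
    · rintro hws ⟨i, rfl⟩
      exact hfnsupp i hws
    · intro hw
      rcases hcov w with ⟨i, rfl⟩ | ⟨i, hwi⟩
      · exact absurd ⟨i, rfl⟩ hw
      · exact hpsupp hwi
  -- core = range f
  have hcore : coreSet G = Set.range f := by
    ext w
    constructor
    · rintro ⟨u, hu, hadj⟩
      rw [hsupp] at hu
      rcases hcov u with ⟨i, rfl⟩ | ⟨i, hui⟩
      · exact absurd ⟨i, rfl⟩ hu
      · exact ⟨i, ((hpend i u hui w).mp hadj).symm⟩
    · rintro ⟨i, rfl⟩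
      obtain ⟨p, hp⟩ := hPne i
      exact ⟨p, hpsupp hp, (hpend i p hp (f i)).mpr rfl⟩
  -- connectivity
  have hTconn := hT.isConnected
  have hV : Nonempty V := hTconn.nonempty
  let hom : T →g G := ⟨f, fun h => (hff _ _).mpr h⟩
  have reach_ff : ∀ i j, G.Reachable (f i) (f j) := fun i j =>
    (hTconn.preconnected i j).map hom
  have reach_to_f : ∀ w, G.Reachable w (f (r w)) := by
    intro w
    rcases hrspec w with h | h
    · rw [← h]
    · exact ((hpend _ w h (f (r w))).mpr rfl).reachable
  have hGconn : G.Connected := by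
    haveI : Nonempty W := ⟨f (Classical.arbitrary V)⟩
    refine ⟨fun a b => ?_⟩
    exact ((reach_to_f a).trans (reach_ff (r a) (r b))).trans (reach_to_f b).symm
  -- acyclicity
  have hGacyc : G.IsAcyclic := by
    rw [isAcyclic_iff_forall_adj_isBridge]
    intro a b hab
    rw [isBridge_iff]
    change ¬ (G \ fromEdgeSet {s(a, b)}).Reachable a b
    -- helper: a pendant vertex whose unique edge is deleted is isolated
    have isol : ∀ {i w c H}, w ∈ P i → H = G \ fromEdgeSet {s(w, f i)} →
        ¬ H.Adj w c := by
      rintro i w c H hw rfl hadj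
      rw [sdiff_adj, fromEdgeSet_adj] at hadj
      obtain ⟨h1, h2⟩ := hadj
      have hc : c = f i := (hpend i w hw c).mp h1
      subst hc
      exact h2 ⟨rfl, h1.ne⟩
    rcases hcov a with ⟨u, rfl⟩ | ⟨i, hai⟩
    · rcases hcov b with ⟨v, rfl⟩ | ⟨j, hbj⟩
      · -- both in range f : project to T
        intro hreach
        have hTuv : T.Adj u v := (hff u v).mp hab
        have hTbridge := (isAcyclic_iff_forall_adj_isBridge.mp hT.IsAcyclic) hTuv
        rw [isBridge_iff] at hTbridge
        refine hTbridge ?_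
        obtain ⟨p⟩ := hreach
        have proj : ∀ {c d : W} (_ : (G \ fromEdgeSet {s(f u, f v)}).Walk c d),
            (T \ fromEdgeSet {s(u, v)}).Reachable (r c) (r d) := by
          intro c d p
          induction p with
          | nil => exact Reachable.refl _
          | @cons x y z hadj p ih =>
            refine Reachable.trans ?_ ih
            rw [sdiff_adj, fromEdgeSet_adj] at hadj
            obtain ⟨h1, h2⟩ := hadj
            rcases hrspec x with hx | hx
            · rcases hrspec y with hy | hy
              · -- both f-images
                rw [hx, hy] at h1 h2
                have hTxy : T.Adj (r x) (r y) := (hff _ _).mp h1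
                have : (T \ fromEdgeSet {s(u, v)}).Adj (r x) (r y) := by
                  rw [sdiff_adj, fromEdgeSet_adj]
                  refine ⟨hTxy, ?_⟩
                  rintro ⟨hs, -⟩
                  refine h2 ⟨?_, hf.ne_iff.mpr hTxy.ne⟩
                  simp only [Set.mem_singleton_iff] at hs ⊢
                  rw [Sym2.eq_iff] at hs ⊢
                  rcases hs with ⟨h3, h4⟩ | ⟨h3, h4⟩
                  · exact Or.inl ⟨by rw [h3], by rw [h4]⟩
                  · exact Or.inr ⟨by rw [h3], by rw [h4]⟩
                exact this.reachable
              · -- y pendant : x = f (r y)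
                have hx' : x = f (r y) := (hpend' hy x).mp h1
                have : r x = r y := by rw [hx', hrf]
                rw [this]
            · -- x pendant : y = f (r x)
              have hy' : y = f (r x) := (hpend _ x hx y).mp h1
              have : r y = r x := by rw [hy', hrf]
              rw [← this]
        have := proj p
        rwa [hrf, hrf] at this
      · -- b pendant, so a = f j and the deleted edge isolates b
        have ha : f u = f j := (hpend' hbj (f u)).mp hab
        intro hreach
        obtain ⟨p⟩ := hreach.symm
        cases p with
        | nil => exact (hpnf hbj) ⟨u, rfl⟩
        | cons hadj p =>
          exact isol hbj (by rw [Sym2.eq_swap, ha]) hadj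
    · -- a pendant
      have hb : b = f i := (hpend i a hai b).mp hab
      intro hreach
      obtain ⟨p⟩ := hreach
      cases p with
      | nil => exact (hpnf hai) ⟨i, hb ▸ rfl⟩
      | cons hadj p =>
        exact isol hai (by rw [hb]) hadj
  -- union = univ
  have hunion : suppSet G ∪ coreSet G = Set.univ := by
    rw [hsupp, hcore]
    ext w
    simp only [Set.mem_union, Set.mem_compl_iff, Set.mem_univ, iff_true]
    tauto
  exact ⟨⟨⟨hGconn, hGacyc⟩, hunion⟩, hcore, hsupp⟩
end
end

section
/- Let T be a tree of order n and *T = *(k_1,...,k_n)T a stellare of T with k_i ≥ 2 for all i. Then the nullity of A(*T) equals (Σ_{i=1}^n k_i) − n, and the rank of A(*T) equals 2n. -/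
open scoped Classical

open SimpleGraph Matrix

noncomputable section

variable {V : Type*}

/-- For a stellare `*T` of a tree `T` of order `n`: `null(A(*T)) = (Σ kᵢ) − n` and
`rank(A(*T)) = 2n`. -/
theorem stmt5 {W : Type*} [Fintype V] [Fintype W] (T : SimpleGraph V) (G : SimpleGraph W)
    (f : V → W) (P : V → Finset W) (k : V → ℕ)
    (hT : T.IsTree) (hst : IsStellare T G f P k) :
    nullity G = (∑ i : V, k i) - Fintype.card V ∧ rankA G = 2 * Fintype.card V := by
  classical
  obtain ⟨finj, cardP, twole, disj, notmem, cover, adjff, adjpend⟩ := hst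
  set n := Fintype.card V with hn
  -- choose a pendant in each P i
  have hPne : ∀ i, (P i).Nonempty := fun i =>
    Finset.card_pos.mp (by rw [cardP]; have := twole i; omega)
  choose p hp using hPne
  have pinj : ∀ i j, p i = p j → i = j := by
    intro i j hij
    by_contra hne
    exact Finset.disjoint_left.mp (disj i j hne) (hp i) (by rw [hij]; exact hp j)
  -- cardinality of W
  have cardW : Fintype.card W = n + ∑ i : V, k i := by
    have hU : (Finset.univ : Finset W) =
        Finset.image f Finset.univ ∪ Finset.univ.biUnion P := by
      ext w
      simp only [Finset.mem_univ, true_iff, Finset.mem_union, Finset.mem_image,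
        Finset.mem_biUnion]
      rcases cover w with ⟨i, rfl⟩ | ⟨i, hi⟩
      · exact Or.inl ⟨i, trivial, rfl⟩
      · exact Or.inr ⟨i, trivial, hi⟩
    have hdisj : Disjoint (Finset.image f Finset.univ) (Finset.univ.biUnion P) := by
      rw [Finset.disjoint_left]
      rintro w hw hw2
      obtain ⟨i, _, rfl⟩ := Finset.mem_image.mp hw
      obtain ⟨j, _, hj⟩ := Finset.mem_biUnion.mp hw2
      exact notmem i j hj
    rw [← Finset.card_univ, hU, Finset.card_union_of_disjoint hdisj,
      Finset.card_image_of_injective _ finj, Finset.card_univ,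
      Finset.card_biUnion (fun i _ j _ hij => disj i j hij)]
    simp [cardP, hn]
  have hNn : n ≤ ∑ i : V, k i := by
    calc n = ∑ _i : V, 1 := by simp [hn]
      _ ≤ ∑ i : V, k i := Finset.sum_le_sum fun i _ => by have := twole i; omega
  -- the linear map ψ
  let ψ : (W → ℝ) →ₗ[ℝ] (V → ℝ) × (V → ℝ) :=
    { toFun := fun x => (fun i => x (f i), fun i => ∑ w ∈ P i, x w)
      map_add' := by
        intro x y
        refine Prod.ext (funext fun i => rfl) (funext fun i => ?_)
        simp [Finset.sum_add_distrib]
      map_smul' := by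
        intro c x
        refine Prod.ext (funext fun i => rfl) (funext fun i => ?_)
        simp [Finset.mul_sum] }
  -- row computations
  have rowP : ∀ (x : W → ℝ) i w, w ∈ P i → (adjMat G *ᵥ x) w = x (f i) := by
    intro x i w hw
    simp only [adjMat, mulVec, dotProduct, of_apply]
    rw [Finset.sum_eq_single (f i)]
    · rw [if_pos ((adjpend i w hw (f i)).mpr rfl), one_mul]
    · intro b _ hb
      rw [if_neg (fun h => hb ((adjpend i w hw b).mp h)), zero_mul]
    · intro h; exact absurd (Finset.mem_univ _) h
  have rowC : ∀ (x : W → ℝ), (∀ j, x (f j) = 0) →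
      ∀ i, (adjMat G *ᵥ x) (f i) = ∑ w ∈ P i, x w := by
    intro x hx0 i
    simp only [adjMat, mulVec, dotProduct, of_apply]
    have hterm : ∀ u : W, (if G.Adj (f i) u then (1 : ℝ) else 0) * x u =
        if u ∈ P i then x u else 0 := by
      intro u
      rcases cover u with ⟨j, rfl⟩ | ⟨j, hj⟩
      · rw [hx0 j, mul_zero, if_neg (notmem j i)]
      · by_cases hij : i = j
        · subst hij
          rw [if_pos (G.adj_symm ((adjpend i u hj (f i)).mpr rfl)), if_pos hj, one_mul]
        · rw [if_neg, if_neg, zero_mul]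
          · exact fun hu => hij (Classical.byContradiction fun hne =>
              Finset.disjoint_left.mp (disj i j hne) hu hj)
          · intro hadj
            exact hij (finj ((adjpend j u hj (f i)).mp (G.adj_symm hadj)))
    calc ∑ u : W, (if G.Adj (f i) u then (1 : ℝ) else 0) * x u
        = ∑ u : W, (if u ∈ P i then x u else 0) := Finset.sum_congr rfl fun u _ => hterm u
      _ = ∑ w ∈ P i, x w := by rw [Finset.sum_ite_mem, Finset.univ_inter]
  -- kernel identification
  have hker : LinearMap.ker (adjMat G).mulVecLin = LinearMap.ker ψ := by
    ext x
    simp only [LinearMap.mem_ker, Matrix.mulVecLin_apply]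
    constructor
    · intro hx
      have hx0 : ∀ j, x (f j) = 0 := by
        intro j
        have h1 := rowP x j (p j) (hp j)
        rw [hx] at h1
        exact h1.symm.trans rfl
      refine Prod.ext (funext fun i => hx0 i) (funext fun i => ?_)
      have h2 := rowC x hx0 i
      rw [hx] at h2
      exact h2.symm.trans rfl
    · intro hx
      have hx1 : ∀ i, x (f i) = 0 := fun i => congrFun (congrArg Prod.fst hx) i
      have hx2 : ∀ i, ∑ w ∈ P i, x w = 0 := fun i => congrFun (congrArg Prod.snd hx) i
      funext w
      rcases cover w with ⟨i, rfl⟩ | ⟨i, hi⟩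
      · rw [rowC x hx1 i, hx2 i]; rfl
      · rw [rowP x i w hi, hx1 i]; rfl
  -- surjectivity of ψ
  have hsurj : Function.Surjective ψ := by
    rintro ⟨a, b⟩
    set x : W → ℝ := fun w =>
      if h : ∃ i, w = f i then a h.choose
      else if h2 : ∃ i, w = p i then b h2.choose else 0 with hxdef
    have hxf : ∀ i, x (f i) = a i := by
      intro i
      have h : ∃ j, f i = f j := ⟨i, rfl⟩
      rw [hxdef]
      simp only [dif_pos h]
      exact congrArg a (finj h.choose_spec).symm
    have hxp : ∀ i, x (p i) = b i := by
      intro i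
      have h1 : ¬∃ j, p i = f j := by
        rintro ⟨j, hj⟩
        exact notmem j i (by rw [← hj]; exact hp i)
      have h2 : ∃ j, p i = p j := ⟨i, rfl⟩
      rw [hxdef]
      simp only [dif_neg h1, dif_pos h2]
      exact congrArg b (pinj _ _ h2.choose_spec).symm
    have hx0 : ∀ i, ∀ w ∈ P i, w ≠ p i → x w = 0 := by
      intro i w hw hne
      have h1 : ¬∃ j, w = f j := by
        rintro ⟨j, hj⟩
        exact notmem j i (by rw [← hj]; exact hw)
      have h2 : ¬∃ j, w = p j := by
        rintro ⟨j, hj⟩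
        have hij : i = j := by
          by_contra hij
          exact Finset.disjoint_left.mp (disj i j hij) hw (by rw [hj]; exact hp j)
        exact hne (by rw [hj, hij])
      rw [hxdef]
      simp only [dif_neg h1, dif_neg h2]
    refine ⟨x, Prod.ext (funext fun i => hxf i) (funext fun i => ?_)⟩
    show ∑ w ∈ P i, x w = b i
    rw [Finset.sum_eq_single (p i) (fun w hw hne => hx0 i w hw hne)
      (fun h => absurd (hp i) h)]
    exact hxp i
  -- dimension count
  have h1 := LinearMap.finrank_range_add_finrank_ker ψ
  rw [LinearMap.range_eq_top.mpr hsurj, finrank_top] at h1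
  have h2 : Module.finrank ℝ ((V → ℝ) × (V → ℝ)) = 2 * n := by
    rw [Module.finrank_prod, Module.finrank_pi]
    omega
  have h3 : Module.finrank ℝ (W → ℝ) = Fintype.card W := Module.finrank_pi ℝ
  have hnull : nullity G = (∑ i : V, k i) - n := by
    unfold nullity
    rw [hker]
    omega
  refine ⟨hnull, ?_⟩
  have h4 := LinearMap.finrank_range_add_finrank_ker (adjMat G).mulVecLin
  have h5 : rankA G = Module.finrank ℝ (LinearMap.range (adjMat G).mulVecLin) := rfl
  have h6 : Module.finrank ℝ (LinearMap.ker (adjMat G).mulVecLin) = nullity G := rfl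
  omega
end
end

section
/- Let T be a tree of order n and *(k_1,...,k_n)T a stellare of T (k_i ≥ 2). Then the number of maximum matchings of *(k_1,...,k_n)T equals k_1·k_2·...·k_n, and its matching number equals n. -/
open scoped Classical

open SimpleGraph Matrix

noncomputable section

variable {V : Type*}

section StellAux

variable {W : Type*}

/-- From an edge of a subgraph containing `v`, extract the other endpoint. -/
lemma stell_mem_edge_adj {G : SimpleGraph W} {M : G.Subgraph} {v : W} (e : Sym2 W) :
    e ∈ M.edgeSet → v ∈ e → ∃ w, M.Adj v w ∧ e = s(v, w) := by
  induction e using Sym2.inductionOn with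
  | hf a b =>
    intro he hv
    rw [SimpleGraph.Subgraph.mem_edgeSet] at he
    rcases Sym2.mem_iff.mp hv with rfl | rfl
    · exact ⟨b, he, rfl⟩
    · exact ⟨a, he.symm, Sym2.eq_swap⟩

/-- In a matching, two edges through the same vertex are equal. -/
lemma stell_matching_edge_eq {G : SimpleGraph W} {M : G.Subgraph} (hM : M.IsMatching)
    {v : W} {e e' : Sym2 W} (he : e ∈ M.edgeSet) (he' : e' ∈ M.edgeSet)
    (hv : v ∈ e) (hv' : v ∈ e') : e = e' := by
  obtain ⟨w, hw, hew⟩ := stell_mem_edge_adj e he hv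
  obtain ⟨w', hw', hew'⟩ := stell_mem_edge_adj e' he' hv'
  obtain ⟨x, -, hun⟩ := hM (M.edge_vert hw)
  rw [hew, hew', hun w hw, hun w' hw']

/-- The candidate maximum matching associated to a choice of pendant vertices. -/
def stellSub {V : Type*} (G : SimpleGraph W) (f : V → W) (P : V → Finset W)
    (hadj : ∀ i, ∀ w ∈ P i, G.Adj (f i) w) (g : ∀ i, P i) : G.Subgraph where
  verts := Set.range f ∪ {w | ∃ i, w = (g i : W)}
  Adj a b := ∃ i, (a = f i ∧ b = (g i : W)) ∨ (a = (g i : W) ∧ b = f i)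
  adj_sub := by
    rintro a b ⟨i, ⟨rfl, rfl⟩ | ⟨rfl, rfl⟩⟩
    · exact hadj i _ (g i).2
    · exact (hadj i _ (g i).2).symm
  edge_vert := by
    rintro a b ⟨i, ⟨rfl, rfl⟩ | ⟨rfl, rfl⟩⟩
    · exact Or.inl ⟨i, rfl⟩
    · exact Or.inr ⟨i, rfl⟩
  symm := by
    constructor
    rintro a b ⟨i, ⟨rfl, rfl⟩ | ⟨rfl, rfl⟩⟩
    · exact ⟨i, Or.inr ⟨rfl, rfl⟩⟩
    · exact ⟨i, Or.inl ⟨rfl, rfl⟩⟩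

lemma stellSub_adj {V : Type*} (G : SimpleGraph W) (f : V → W) (P : V → Finset W)
    (hadj : ∀ i, ∀ w ∈ P i, G.Adj (f i) w) (g : ∀ i, P i) (a b : W) :
    (stellSub G f P hadj g).Adj a b ↔
      ∃ i, (a = f i ∧ b = (g i : W)) ∨ (a = (g i : W) ∧ b = f i) := Iff.rfl

lemma stellSub_verts {V : Type*} (G : SimpleGraph W) (f : V → W) (P : V → Finset W)
    (hadj : ∀ i, ∀ w ∈ P i, G.Adj (f i) w) (g : ∀ i, P i) :
    (stellSub G f P hadj g).verts = Set.range f ∪ {w | ∃ i, w = (g i : W)} := rfl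

end StellAux

/-- For a stellare `*(k₁,…,kₙ)T` of a tree `T` of order `n`: the number of maximum matchings is
`k₁⋯kₙ` and the matching number is `n`. -/
theorem stmt6 {W : Type*} [Fintype V] [Fintype W] (T : SimpleGraph V) (G : SimpleGraph W)
    (f : V → W) (P : V → Finset W) (k : V → ℕ)
    (hT : T.IsTree) (hst : IsStellare T G f P k) :
    numMaxMatchings G = ∏ i : V, k i ∧ matchingNumber G = Fintype.card V := by
  classical
  obtain ⟨f_inj, card_P, two_le, disj, not_mem, cover, adj_ff, adj_pend⟩ := hst
  -- pendant vertices are not f-vertices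
  have hPf : ∀ {i w}, w ∈ P i → ∀ j, w ≠ f j := by
    intro i w hw j hwj
    exact not_mem j i (hwj ▸ hw)
  have hPinj : ∀ {i j w}, w ∈ P i → w ∈ P j → i = j := by
    intro i j w hi hj
    by_contra h
    exact (Finset.disjoint_left.mp (disj i j h)) hi hj
  have hadjP : ∀ i, ∀ w ∈ P i, G.Adj (f i) w :=
    fun i w hw => ((adj_pend i w hw (f i)).mpr rfl).symm
  set Φ : (∀ i, P i) → G.Subgraph := stellSub G f P hadjP with hΦ
  -- each Φ g is a matching
  have hΦmatch : ∀ g, (Φ g).IsMatching := by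
    intro g v hv
    rw [hΦ, stellSub_verts] at hv
    simp only [hΦ, stellSub_adj]
    rcases hv with ⟨i, rfl⟩ | ⟨i, hvi⟩
    · refine ⟨(g i : W), ⟨i, Or.inl ⟨rfl, rfl⟩⟩, ?_⟩
      rintro y ⟨j, ⟨hj, rfl⟩ | ⟨hj, rfl⟩⟩
      · rw [f_inj hj]
      · exact absurd hj.symm (hPf (g j).2 i)
    · subst hvi
      refine ⟨f i, ⟨i, Or.inr ⟨rfl, rfl⟩⟩, ?_⟩
      rintro y ⟨j, ⟨hj, rfl⟩ | ⟨hj, rfl⟩⟩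
      · exact absurd hj (hPf (g i).2 j)
      · have h2 : (g i : W) ∈ P j := by rw [hj]; exact (g j).2
        exact congrArg f (hPinj h2 (g i).2)
  -- the edge set of Φ g
  have hΦedge : ∀ g : ∀ i, P i,
      (Φ g).edgeSet = Set.range (fun i => s(f i, (g i : W))) := by
    intro g
    ext e
    induction e using Sym2.inductionOn with
    | hf a b =>
      rw [SimpleGraph.Subgraph.mem_edgeSet, hΦ, stellSub_adj]
      constructor
      · rintro ⟨i, ⟨rfl, rfl⟩ | ⟨rfl, rfl⟩⟩
        · exact ⟨i, rfl⟩
        · exact ⟨i, Sym2.eq_swap⟩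
      · rintro ⟨i, hi⟩
        rcases Sym2.eq_iff.mp hi with ⟨h1, h2⟩ | ⟨h1, h2⟩
        · exact ⟨i, Or.inl ⟨h1.symm, h2.symm⟩⟩
        · exact ⟨i, Or.inr ⟨h2.symm, h1.symm⟩⟩
  have hinj2 : ∀ g : ∀ i, P i, Function.Injective (fun i => s(f i, (g i : W))) := by
    intro g i j hij
    rcases Sym2.eq_iff.mp hij with ⟨h1, -⟩ | ⟨h1, -⟩
    · exact f_inj h1
    · exact absurd h1.symm (hPf (g j).2 i)
  have hΦcard : ∀ g : ∀ i, P i, (Φ g).edgeSet.ncard = Fintype.card V := by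
    intro g
    rw [hΦedge g, ← Nat.card_coe_set_eq, Nat.card_range_of_injective (hinj2 g),
      Nat.card_eq_fintype_card]
  -- every edge of G contains an f-vertex
  have hedgef : ∀ e ∈ G.edgeSet, ∃ i, f i ∈ e := by
    intro e
    induction e using Sym2.inductionOn with
    | hf a b =>
      intro he
      rw [SimpleGraph.mem_edgeSet] at he
      rcases cover a with ⟨i, hi⟩ | ⟨i, hi⟩
      · exact ⟨i, by rw [hi]; exact Sym2.mem_mk_left _ _⟩
      · have hb : b = f i := (adj_pend i a hi b).mp he
        exact ⟨i, by rw [← hb]; exact Sym2.mem_mk_right _ _⟩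
  -- injective labelling of the edges of a matching by f-vertices
  have hψ : ∀ M : G.Subgraph, M.IsMatching →
      ∃ ψ : M.edgeSet → V, Function.Injective ψ ∧ ∀ e : M.edgeSet, f (ψ e) ∈ (e : Sym2 W) := by
    intro M hM
    have h1 : ∀ e : M.edgeSet, ∃ i, f i ∈ (e : Sym2 W) := fun e =>
      hedgef e (M.edgeSet_subset e.2)
    choose ψ hψmem using h1
    refine ⟨ψ, ?_, hψmem⟩
    intro e e' hee
    have h2 := hψmem e'
    rw [← hee] at h2
    exact Subtype.ext (stell_matching_edge_eq hM e.2 e'.2 (hψmem e) h2)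
  -- upper bound for the matching number
  have hbound : ∀ M : G.Subgraph, M.IsMatching → M.edgeSet.ncard ≤ Fintype.card V := by
    intro M hM
    obtain ⟨ψ, hinj, -⟩ := hψ M hM
    rw [← Nat.card_coe_set_eq, ← Nat.card_eq_fintype_card]
    exact Nat.card_le_card_of_injective ψ hinj
  -- a canonical choice of pendants
  have hne : ∀ i, (P i).Nonempty := by
    intro i
    rw [← Finset.card_pos, card_P i]
    have := two_le i; omega
  have g0 : ∀ i, P i := fun i => ⟨(hne i).choose, (hne i).choose_spec⟩
  -- the matching number
  have hnum : matchingNumber G = Fintype.card V := by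
    apply IsGreatest.csSup_eq
    constructor
    · exact ⟨Φ g0, hΦmatch g0, hΦcard g0⟩
    · rintro m ⟨M, hM, rfl⟩
      exact hbound M hM
  -- maximum matchings are exactly the Φ g
  have hmax : maxMatchings G = Set.range Φ := by
    ext M
    constructor
    · rintro ⟨hM, hcard⟩
      rw [hnum] at hcard
      obtain ⟨ψ, hinj, hmem⟩ := hψ M hM
      have hbij : Function.Bijective ψ := by
        rw [Nat.bijective_iff_injective_and_card]
        exact ⟨hinj, by rw [Nat.card_coe_set_eq, hcard, Nat.card_eq_fintype_card]⟩
      -- every f-vertex has a partner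
      have hpart : ∀ i, ∃ w, M.Adj (f i) w := by
        intro i
        obtain ⟨e, he⟩ := hbij.surjective i
        have hfi := hmem e
        rw [he] at hfi
        obtain ⟨w, hw, -⟩ := stell_mem_edge_adj (e : Sym2 W) e.2 hfi
        exact ⟨w, hw⟩
      choose w hw using hpart
      -- the partner of f i is a pendant of i
      have hwP : ∀ i, w i ∈ P i := by
        intro i
        rcases cover (w i) with ⟨j, hj⟩ | ⟨j, hj⟩
        · exfalso
          have hadj1 : M.Adj (f i) (f j) := hj ▸ hw i
          have hij : i ≠ j := by
            rintro rfl
            exact G.irrefl (M.adj_sub hadj1)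
          set E : M.edgeSet :=
            ⟨s(f i, f j), SimpleGraph.Subgraph.mem_edgeSet.mpr hadj1⟩ with hEdef
          have hl := hmem E
          have hcases : ψ E = i ∨ ψ E = j := by
            rcases Sym2.mem_iff.mp hl with h | h
            · exact Or.inl (f_inj h)
            · exact Or.inr (f_inj h)
          rcases hcases with hc | hc
          · obtain ⟨E', hE'⟩ := hbij.surjective j
            have h1 : f j ∈ (E' : Sym2 W) := by
              have := hmem E'; rwa [hE'] at this
            have h2 : f j ∈ (E : Sym2 W) := Sym2.mem_mk_right _ _
            have hEE : E = E' :=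
              Subtype.ext (stell_matching_edge_eq hM E.2 E'.2 h2 h1)
            rw [← hEE, hc] at hE'
            exact hij hE'
          · obtain ⟨E', hE'⟩ := hbij.surjective i
            have h1 : f i ∈ (E' : Sym2 W) := by
              have := hmem E'; rwa [hE'] at this
            have h2 : f i ∈ (E : Sym2 W) := Sym2.mem_mk_left _ _
            have hEE : E = E' :=
              Subtype.ext (stell_matching_edge_eq hM E.2 E'.2 h2 h1)
            rw [← hEE, hc] at hE'
            exact hij hE'.symm
        · -- w i ∈ P j, so j = i
          have hfeq : f i = f j := (adj_pend j (w i) hj (f i)).mp (M.adj_sub (hw i)).symm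
          rwa [← f_inj hfeq] at hj
      refine ⟨fun i => ⟨w i, hwP i⟩, ?_⟩
      have hAdjeq : ∀ a b, (Φ fun i => ⟨w i, hwP i⟩).Adj a b ↔ M.Adj a b := by
        intro a b
        rw [hΦ, stellSub_adj]
        constructor
        · rintro ⟨i, ⟨rfl, rfl⟩ | ⟨rfl, rfl⟩⟩
          · exact hw i
          · exact (hw i).symm
        · intro hab
          have he : s(a, b) ∈ M.edgeSet := SimpleGraph.Subgraph.mem_edgeSet.mpr hab
          have hm := hmem ⟨s(a, b), he⟩
          set i := ψ ⟨s(a, b), he⟩ with hidef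
          obtain ⟨x, -, hun⟩ := hM (M.edge_vert (hw i))
          rcases Sym2.mem_iff.mp hm with h | h
          · have hab' : M.Adj (f i) b := by rw [h]; exact hab
            exact ⟨i, Or.inl ⟨h.symm, (hun b hab').trans (hun (w i) (hw i)).symm⟩⟩
          · have hab' : M.Adj (f i) a := by rw [h]; exact hab.symm
            exact ⟨i, Or.inr ⟨(hun a hab').trans (hun (w i) (hw i)).symm, h.symm⟩⟩
      apply SimpleGraph.Subgraph.ext
      · rw [← (hΦmatch _).support_eq_verts, ← hM.support_eq_verts]
        ext v
        simp only [SimpleGraph.Subgraph.mem_support]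
        exact exists_congr fun y => hAdjeq v y
      · funext a b
        exact propext (hAdjeq a b)
    · rintro ⟨g, rfl⟩
      exact ⟨hΦmatch g, by rw [hΦcard g, hnum]⟩
  -- Φ is injective
  have hΦinj : Function.Injective Φ := by
    intro g g' hgg
    funext i
    have h1 : (Φ g).Adj (f i) (g i) := by
      rw [hΦ, stellSub_adj]; exact ⟨i, Or.inl ⟨rfl, rfl⟩⟩
    rw [hgg, hΦ, stellSub_adj] at h1
    obtain ⟨j, ⟨hj1, hj2⟩ | ⟨hj1, hj2⟩⟩ := h1
    · exact Subtype.ext (by rw [hj2, f_inj hj1])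
    · exact absurd hj1.symm (hPf (g' j).2 i)
  refine ⟨?_, hnum⟩
  rw [numMaxMatchings, hmax, ← Nat.card_coe_set_eq, Nat.card_range_of_injective hΦinj,
    Nat.card_pi]
  exact Finset.prod_congr rfl fun i _ => by
    rw [Nat.card_eq_fintype_card, Fintype.card_coe, card_P]
end
end

section
/- Let T be a tree of order n ≥ 2 and *T any stellare of T. Then V(T) is the unique minimum dominating set of *T, and the domination number γ(*T) = n. -/
open scoped Classical

open SimpleGraph Matrix

noncomputable section

variable {V : Type*}

/-- The domination number of a stellare `*T` of a tree `T` of order `n ≥ 2` is `n`, and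
`V(T)` is the unique minimum dominating set of `*T`. -/
theorem stmt7 {W : Type*} [Fintype V] [Fintype W] (T : SimpleGraph V) (G : SimpleGraph W)
    (f : V → W) (P : V → Finset W) (k : V → ℕ)
    (hT : T.IsTree) (hn : 2 ≤ Fintype.card V) (hst : IsStellare T G f P k) :
    sInf {n | ∃ s : Set W, (∀ w, w ∈ s ∨ ∃ u ∈ s, G.Adj u w) ∧ s.ncard = n}
        = Fintype.card V ∧
      ∀ s : Set W, (∀ w, w ∈ s ∨ ∃ u ∈ s, G.Adj u w) → s.ncard = Fintype.card V →
        s = Set.range f := by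
  classical
  obtain ⟨finj, cardP, twole, disjP, nmem, cover, adjff, adjp⟩ := hst
  -- range f is a dominating set
  have hdom : ∀ w : W, w ∈ Set.range f ∨ ∃ u ∈ Set.range f, G.Adj u w := by
    intro w
    rcases cover w with ⟨i, rfl⟩ | ⟨i, hi⟩
    · exact Or.inl ⟨i, rfl⟩
    · exact Or.inr ⟨f i, ⟨i, rfl⟩, G.adj_symm ((adjp i w hi (f i)).mpr rfl)⟩
  have hcard : (Set.range f).ncard = Fintype.card V := by
    rw [← Set.image_univ, Set.ncard_image_of_injective _ finj, Set.ncard_univ,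
      Nat.card_eq_fintype_card]
  -- blocks
  set B : V → Finset W := fun i => insert (f i) (P i) with hB
  have hBdisj : ∀ i j : V, i ≠ j → Disjoint (B i) (B j) := by
    intro i j hij
    rw [Finset.disjoint_left]
    intro x hxi hxj
    simp only [hB, Finset.mem_insert] at hxi hxj
    rcases hxi with rfl | hxi
    · rcases hxj with h | h
      · exact hij (finj h)
      · exact nmem i j h
    · rcases hxj with rfl | hxj
      · exact nmem j i hxi
      · exact (Finset.disjoint_left.mp (disjP i j hij)) hxi hxj
  -- key counting lemma
  have key : ∀ s : Set W, (∀ w, w ∈ s ∨ ∃ u ∈ s, G.Adj u w) →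
      Fintype.card V ≤ s.ncard ∧ (s.ncard = Fintype.card V → s = Set.range f) := by
    intro s hs
    set F := s.toFinset with hF
    have hmemF : ∀ w, w ∈ F ↔ w ∈ s := fun w => Set.mem_toFinset
    have hncard : s.ncard = F.card := Set.ncard_eq_toFinset_card' s
    -- if f i ∉ s then all pendants of i are in s
    have hpend : ∀ i, f i ∉ s → P i ⊆ F ∩ B i := by
      intro i hfi w hw
      have hws : w ∈ s := by
        rcases hs w with h | ⟨u, hu, hadj⟩
        · exact h
        · have : u = f i := (adjp i w hw u).mp (G.adj_symm hadj)
          exact absurd (this ▸ hu) hfi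
      exact Finset.mem_inter.mpr ⟨(hmemF w).mpr hws, Finset.mem_insert_of_mem hw⟩
    have hone : ∀ i, 1 ≤ (F ∩ B i).card := by
      intro i
      by_cases hfi : f i ∈ s
      · exact Finset.card_pos.mpr ⟨f i,
          Finset.mem_inter.mpr ⟨(hmemF _).mpr hfi, Finset.mem_insert_self _ _⟩⟩
      · calc 1 ≤ k i := le_trans one_le_two (twole i)
          _ = (P i).card := (cardP i).symm
          _ ≤ (F ∩ B i).card := Finset.card_le_card (hpend i hfi)
    have hFeq : F = Finset.univ.biUnion (fun i => F ∩ B i) := by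
      apply Finset.Subset.antisymm
      · intro w hw
        rcases cover w with ⟨i, rfl⟩ | ⟨i, hi⟩
        · exact Finset.mem_biUnion.mpr ⟨i, Finset.mem_univ _,
            Finset.mem_inter.mpr ⟨hw, Finset.mem_insert_self _ _⟩⟩
        · exact Finset.mem_biUnion.mpr ⟨i, Finset.mem_univ _,
            Finset.mem_inter.mpr ⟨hw, Finset.mem_insert_of_mem hi⟩⟩
      · intro w hw
        rcases Finset.mem_biUnion.mp hw with ⟨i, _, hi⟩
        exact (Finset.mem_inter.mp hi).1
    have hcardsum : F.card = ∑ i : V, (F ∩ B i).card := by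
      conv_lhs => rw [hFeq]
      exact Finset.card_biUnion (fun i _ j _ hij =>
        Finset.disjoint_of_subset_left Finset.inter_subset_right
          (Finset.disjoint_of_subset_right Finset.inter_subset_right (hBdisj i j hij)))
    have hlow : Fintype.card V ≤ F.card := by
      calc Fintype.card V = ∑ _i : V, 1 := by simp
        _ ≤ ∑ i : V, (F ∩ B i).card := Finset.sum_le_sum (fun i _ => hone i)
        _ = F.card := hcardsum.symm
    refine ⟨hncard ▸ hlow, ?_⟩
    intro heq
    -- equality forces each block to meet s in exactly one vertex
    have hsum : ∑ i : V, (F ∩ B i).card = ∑ _i : V, 1 := by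
      have h1 : ∑ _i : V, 1 = Fintype.card V := by simp
      rw [← hcardsum, ← hncard, heq, h1]
    have hall : ∀ i : V, (F ∩ B i).card = 1 := by
      intro i
      by_contra hne
      have h2 : 2 ≤ (F ∩ B i).card := by
        have := hone i; omega
      have : ∑ j : V, (F ∩ B j).card > ∑ _j : V, 1 := by
        apply Finset.sum_lt_sum (fun j _ => hone j) ⟨i, Finset.mem_univ i, by omega⟩
      omega
    have hfmem : ∀ i, f i ∈ s := by
      intro i
      by_contra hfi
      have h2 : 2 ≤ (F ∩ B i).card := by
        calc 2 ≤ k i := twole i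
          _ = (P i).card := (cardP i).symm
          _ ≤ (F ∩ B i).card := Finset.card_le_card (hpend i hfi)
      rw [hall i] at h2; omega
    have hsing : ∀ i, F ∩ B i = {f i} := by
      intro i
      obtain ⟨a, ha⟩ := Finset.card_eq_one.mp (hall i)
      have hfi : f i ∈ F ∩ B i :=
        Finset.mem_inter.mpr ⟨(hmemF _).mpr (hfmem i), Finset.mem_insert_self _ _⟩
      rw [ha] at hfi ⊢
      rw [Finset.mem_singleton] at hfi
      rw [hfi]
    ext w
    constructor
    · intro hw
      have hwF : w ∈ F := (hmemF w).mpr hw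
      rw [hFeq] at hwF
      rcases Finset.mem_biUnion.mp hwF with ⟨i, _, hi⟩
      rw [hsing i, Finset.mem_singleton] at hi
      exact ⟨i, hi.symm⟩
    · rintro ⟨i, rfl⟩
      exact hfmem i
  -- finish
  have hmem : Fintype.card V ∈
      {n | ∃ s : Set W, (∀ w, w ∈ s ∨ ∃ u ∈ s, G.Adj u w) ∧ s.ncard = n} :=
    ⟨Set.range f, hdom, hcard⟩
  constructor
  · refine le_antisymm (Nat.sInf_le hmem) ?_
    apply le_csInf ⟨_, hmem⟩
    rintro m ⟨s, hs, rfl⟩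
    exact (key s hs).1
  · intro s hs hcs
    exact (key s hs).2 hcs
end
end

section
/- Let T be a tree of order n with labels [n] and *T = *(k_1,...,k_n)T a stellare of T. For each vertex i of T let R(i) denote the set of the k_i pendant vertices attached to i. Then the set {e_i : i ∈ V(T)} ∪ {e_{R(i)} : i ∈ V(T)}, where e_U := Σ_{v∈U} e_v, is a basis of the column space of A(*T). -/
open scoped Classical

open SimpleGraph Matrix

noncomputable section

variable {V : Type*}

/-- For a stellare `*T` of a tree `T`, the vectors `e_{f i}` together with the bouquet sums
`e_{P i} = Σ_{w ∈ P i} e_w` form a basis of the column space of the adjacency matrix. -/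
theorem stmt8 {W : Type*} [Fintype V] [Fintype W] (T : SimpleGraph V) (G : SimpleGraph W)
    (f : V → W) (P : V → Finset W) (k : V → ℕ)
    (hT : T.IsTree) (hst : IsStellare T G f P k) :
    let b : V ⊕ V → (W → ℝ) :=
      Sum.elim (fun i w => if w = f i then (1 : ℝ) else 0)
        (fun i w => if w ∈ P i then (1 : ℝ) else 0)
    LinearIndependent ℝ b ∧
      Submodule.span ℝ (Set.range b) = LinearMap.range (adjMat G).mulVecLin := by
  classical
  intro b
  obtain ⟨finj, cardP, twole, disj, notmem, cover, adjff, adjpend⟩ := hst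
  set A := adjMat G with hA
  have hPne : ∀ i, (P i).Nonempty := fun i => Finset.card_pos.mp (by rw [cardP]; have := twole i; omega)
  have hPmem : ∀ {w : W} {i j : V}, w ∈ P i → (w ∈ P j ↔ j = i) := by
    intro w i j hw
    constructor
    · intro hwj; by_contra hne
      exact (Finset.disjoint_left.mp (disj j i hne) hwj) hw
    · rintro rfl; exact hw
  have hwne : ∀ {w : W} {i : V} (j : V), w ∈ P i → w ≠ f j := by
    intro w i j hw h; exact notmem j i (h ▸ hw)
  -- column at a pendant vertex
  have colP : ∀ i, ∀ w ∈ P i, (fun v => A v w) = b (Sum.inl i) := by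
    intro i w hw
    funext v
    have h1 : G.Adj v w ↔ v = f i := by
      rw [adj_comm]; exact adjpend i w hw v
    simp only [hA, adjMat, Matrix.of_apply, b, Sum.elim_inl, h1]
  -- column at a tree vertex
  have colF : ∀ i, (fun v => A v (f i)) =
      (∑ j ∈ Finset.univ.filter (fun j => T.Adj i j), b (Sum.inl j)) + b (Sum.inr i) := by
    intro i
    funext v
    simp only [hA, adjMat, Matrix.of_apply, b, Sum.elim_inl, Sum.elim_inr, Pi.add_apply,
      Finset.sum_apply]
    rcases cover v with ⟨j, rfl⟩ | ⟨j, hvj⟩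
    · have h1 : G.Adj (f j) (f i) ↔ T.Adj i j := by rw [adjff]; exact T.adj_comm j i
      have h2 : (f j ∈ P i) = False := eq_false (notmem j i)
      simp only [h1, h2, if_false, add_zero, finj.eq_iff]
      rw [Finset.sum_ite_eq (Finset.univ.filter (fun j' => T.Adj i j')) j (fun _ => (1:ℝ))]
      simp
    · have h1 : G.Adj v (f i) ↔ i = j := by
        rw [adjpend j v hvj (f i)]
        exact ⟨fun h => finj h, fun h => by rw [h]⟩
      have h2 : ∀ j', (v = f j') = False := fun j' => eq_false (hwne j' hvj)
      have h3 : (v ∈ P i) = (i = j) := by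
        by_cases h : i = j
        · subst h; simp [hvj]
        · simp [hPmem hvj, h]
      simp [h1, h2, h3]
  have mv_single : ∀ w, A.mulVecLin (Pi.single w 1) = fun v => A v w := by
    intro w
    funext v
    simp [Matrix.mulVecLin_apply, Matrix.mulVec_single]
  have binl_mem : ∀ i, b (Sum.inl i) ∈ LinearMap.range A.mulVecLin := by
    intro i
    obtain ⟨w, hw⟩ := hPne i
    exact ⟨Pi.single w 1, by rw [mv_single w, colP i w hw]⟩
  constructor
  · rw [Fintype.linearIndependent_iff]
    intro g hg
    have hval : ∀ w, (∑ j, g (Sum.inl j) * b (Sum.inl j) w)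
        + (∑ j, g (Sum.inr j) * b (Sum.inr j) w) = 0 := by
      intro w
      have := congrFun hg w
      simpa [Finset.sum_apply, Fintype.sum_sum_type] using this
    rintro (i | i)
    · have := hval (f i)
      simpa [b, finj.eq_iff, eq_comm (a := f i), notmem, Finset.sum_ite_eq] using this
    · obtain ⟨w, hw⟩ := hPne i
      have := hval w
      have h2 : ∀ j', (w = f j') = False := fun j' => eq_false (hwne j' hw)
      have h3 : ∀ j, (w ∈ P j) = (j = i) := fun j => by
        by_cases h : j = i
        · subst h; simp [hw]
        · simp [hPmem hw, h]
      simpa [b, h2, h3, Finset.sum_ite_eq'] using this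
  · apply le_antisymm
    · rw [Submodule.span_le]
      rintro _ ⟨(i | i), rfl⟩
      · exact binl_mem i
      · have hb : b (Sum.inr i) = A.mulVecLin (Pi.single (f i) 1)
            - ∑ j ∈ Finset.univ.filter (fun j => T.Adj i j), b (Sum.inl j) := by
          rw [mv_single, colF i]
          exact (add_sub_cancel_left _ _).symm
        rw [SetLike.mem_coe, hb]
        exact sub_mem (LinearMap.mem_range_self _ _)
          (Submodule.sum_mem _ fun j _ => binl_mem j)
    · have colmem : ∀ w, (fun v => A v w) ∈ Submodule.span ℝ (Set.range b) := by
        intro w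
        rcases cover w with ⟨i, rfl⟩ | ⟨i, hw⟩
        · rw [colF i]
          exact add_mem
            (Submodule.sum_mem _ fun j _ => Submodule.subset_span ⟨Sum.inl j, rfl⟩)
            (Submodule.subset_span ⟨Sum.inr i, rfl⟩)
        · rw [colP i w hw]
          exact Submodule.subset_span ⟨Sum.inl i, rfl⟩
      rintro y ⟨x, rfl⟩
      have hx : A.mulVecLin x = ∑ w, x w • (fun v => A v w) := by
        funext v
        simp [Matrix.mulVecLin_apply, Matrix.mulVec, dotProduct, Finset.sum_apply, mul_comm]
      rw [hx]
      exact Submodule.sum_mem _ fun w _ => Submodule.smul_mem _ _ (colmem w)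
end
end

section
/- Let *T = *(k_1,...,k_n)T be a stellare of a tree T of order n, with stellare labeling: pendant vertices attached to vertex i are labeled (i,1),...,(i,k_i). Then the vectors b(i,j) for i ∈ [n], j ∈ {2,...,k_i}, defined by b(i,j)_{(i,1)} = 1, b(i,j)_{(i,j)} = −1, and 0 elsewhere, form a basis of the null space of A(*T). -/
open scoped Classical

open SimpleGraph Matrix

noncomputable section

variable {V : Type*}

/-- `G` is the stellare `*(k₁,…,kₙ)T` of `T` with the stellare labeling: the pendant vertices
attached to vertex `i` are `p i 0, …, p i (k i − 1)` (labels `(i,1),…,(i,kᵢ)`). -/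
structure IsStellareLabeled {W : Type*} [Fintype V] [Fintype W]
    (T : SimpleGraph V) (G : SimpleGraph W) (f : V → W) (k : V → ℕ)
    (p : (i : V) → Fin (k i) → W) : Prop where
  two_le : ∀ i, 2 ≤ k i
  f_inj : Function.Injective f
  p_inj : ∀ i, Function.Injective (p i)
  p_disj : ∀ i j a b, i ≠ j → p i a ≠ p j b
  p_ne_f : ∀ i a j, p i a ≠ f j
  cover : ∀ w : W, (∃ i, w = f i) ∨ (∃ i a, w = p i a)
  adj_ff : ∀ u v, G.Adj (f u) (f v) ↔ T.Adj u v
  adj_pend : ∀ i a x, G.Adj (p i a) x ↔ x = f i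

lemma aux_split {n : ℕ} (hn : 2 ≤ n) (g : Fin n → ℝ) :
    ∑ a, g a = g ⟨0, by omega⟩ + ∑ j : Fin (n-1), g ⟨j.1+1, by omega⟩ := by
  have hc : n - 1 + 1 = n := by omega
  have h := Fintype.sum_equiv (finCongr hc) (fun a => g (finCongr hc a)) g (fun _ => rfl)
  rw [← h, Fin.sum_univ_succ]
  rfl

lemma aux_sum_W {W : Type*} [Fintype V] [Fintype W] (f : V → W) (k : V → ℕ)
    (p : (i : V) → Fin (k i) → W)
    (hfinj : Function.Injective f)
    (hpinj : ∀ i, Function.Injective (p i))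
    (hdisj : ∀ i j a b, i ≠ j → p i a ≠ p j b)
    (hpf : ∀ i a j, p i a ≠ f j)
    (hcov : ∀ w : W, (∃ i, w = f i) ∨ (∃ i a, w = p i a))
    (g : W → ℝ) :
    ∑ w : W, g w = (∑ j : V, g (f j)) + ∑ s : (Σ i : V, Fin (k i)), g (p s.1 s.2) := by
  have hbij : Function.Bijective (Sum.elim f (fun s : Σ i : V, Fin (k i) => p s.1 s.2)) := by
    constructor
    · rintro (u | ⟨i, a⟩) (v | ⟨j, b⟩) h <;> simp only [Sum.elim_inl, Sum.elim_inr] at h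
      · rw [hfinj h]
      · exact absurd h.symm (hpf _ _ _)
      · exact absurd h (hpf _ _ _)
      · by_cases hij : i = j
        · subst hij
          rw [hpinj i h]
        · exact absurd h (hdisj _ _ _ _ hij)
    · intro w
      rcases hcov w with ⟨i, rfl⟩ | ⟨i, a, rfl⟩
      · exact ⟨Sum.inl i, rfl⟩
      · exact ⟨Sum.inr ⟨i, a⟩, rfl⟩
  rw [← Fintype.sum_bijective _ hbij _ g (fun _ => rfl), Fintype.sum_sum_type]
  rfl

/-- The vectors `b(i,j) = e_{(i,1)} − e_{(i,j)}`, for `i ∈ [n]` and `j ∈ {2,…,kᵢ}`, form a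
basis of the null space of the adjacency matrix of the stellare `*(k₁,…,kₙ)T`. -/
theorem stmt9 {W : Type*} [Fintype V] [Fintype W] (T : SimpleGraph V) (G : SimpleGraph W)
    (f : V → W) (k : V → ℕ) (p : (i : V) → Fin (k i) → W)
    (hk : ∀ i, 2 ≤ k i)
    (hT : T.IsTree) (hst : IsStellareLabeled T G f k p) :
    let b : (Σ i : V, Fin (k i - 1)) → (W → ℝ) := fun s w =>
      (if w = p s.1 ⟨0, by have := hk s.1; omega⟩ then (1 : ℝ) else 0)
        - (if w = p s.1 ⟨(s.2 : ℕ) + 1, by have := hk s.1; have := s.2.2; omega⟩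
            then (1 : ℝ) else 0)
    LinearIndependent ℝ b ∧
      Submodule.span ℝ (Set.range b) = LinearMap.ker (adjMat G).mulVecLin := by
  intro b
  obtain ⟨h2le, finj, pinj, pdisj, pnef, cov, adjff, adjpd⟩ := hst
  -- row at a pendant vertex
  have hpend : ∀ (x : W → ℝ) i a, (adjMat G *ᵥ x) (p i a) = x (f i) := by
    intro x i a
    simp only [adjMat, mulVec, dotProduct, of_apply, adjpd, ite_mul, one_mul, zero_mul]
    simp
  -- row at an original vertex
  have hfrow : ∀ (x : W → ℝ) i, (adjMat G *ᵥ x) (f i)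
      = (∑ j : V, if T.Adj i j then x (f j) else 0) + ∑ a : Fin (k i), x (p i a) := by
    intro x i
    have e0 : (adjMat G *ᵥ x) (f i) = ∑ w : W, (if G.Adj (f i) w then 1 else 0) * x w := by
      simp [adjMat, mulVec, dotProduct]
    rw [e0, aux_sum_W f k p finj pinj pdisj pnef cov]
    congr 1
    · apply Finset.sum_congr rfl
      intro j _
      rw [adjff]
      split <;> simp
    · have hadj : ∀ (j : V) (a : Fin (k j)), G.Adj (f i) (p j a) ↔ j = i := by
        intro j a
        rw [G.adj_comm, adjpd]
        exact ⟨fun h => (finj h).symm, fun h => by rw [h]⟩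
      have e1 : ∀ s : (Σ i : V, Fin (k i)),
          (if G.Adj (f i) (p s.1 s.2) then (1:ℝ) else 0) * x (p s.1 s.2)
            = if s.1 = i then x (p s.1 s.2) else 0 := by
        intro s
        rw [hadj s.1 s.2]
        split <;> simp
      rw [Finset.sum_congr rfl (fun s _ => e1 s), ← Finset.univ_sigma_univ, Finset.sum_sigma]
      have e2 : ∀ j : V, (∑ a : Fin (k j), if j = i then x (p j a) else 0)
          = if j = i then (∑ a : Fin (k j), x (p j a)) else 0 := by
        intro j
        split <;> simp
      rw [Finset.sum_congr rfl (fun j _ => e2 j)]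
      simp
  -- kernel characterization
  have hker : ∀ x : W → ℝ, adjMat G *ᵥ x = 0 ↔
      ((∀ i, x (f i) = 0) ∧ ∀ i, ∑ a : Fin (k i), x (p i a) = 0) := by
    intro x
    constructor
    · intro h
      have h1 : ∀ i, x (f i) = 0 := by
        intro i
        have := congrFun h (p i ⟨0, by have := hk i; omega⟩)
        rwa [hpend, Pi.zero_apply] at this
      refine ⟨h1, fun i => ?_⟩
      have := congrFun h (f i)
      rw [hfrow, Pi.zero_apply] at this
      simpa [h1] using this
    · rintro ⟨h1, h2⟩
      funext w
      rcases cov w with ⟨i, rfl⟩ | ⟨i, a, rfl⟩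
      · rw [hfrow, Pi.zero_apply, h2]
        simp [h1]
      · rw [hpend, Pi.zero_apply]
        exact h1 i
  -- each b s is in the kernel
  have hbker : ∀ s, b s ∈ LinearMap.ker (adjMat G).mulVecLin := by
    intro s
    rw [LinearMap.mem_ker, mulVecLin_apply, hker]
    constructor
    · intro i
      simp only [b]
      rw [if_neg (Ne.symm (pnef _ _ _)), if_neg (Ne.symm (pnef _ _ _)), sub_zero]
    · intro i
      rcases s with ⟨u, t⟩
      by_cases hi : i = u
      · subst hi
        simp only [b]
        rw [Finset.sum_sub_distrib]
        have e1 : ∀ (c : Fin (k i)), ∑ a : Fin (k i), (if p i a = p i c then (1:ℝ) else 0) = 1 := by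
          intro c
          have he : ∀ a, (p i a = p i c) ↔ a = c := fun a => ⟨fun h => pinj _ h, fun h => by rw [h]⟩
          simp [he]
        rw [e1, e1, sub_self]
      · have hne : ∀ (a : Fin (k i)) (c : Fin (k u)), p i a ≠ p u c :=
          fun a c => pdisj _ _ _ _ hi
        simp [b, hne]
  constructor
  · -- linear independence
    rw [Fintype.linearIndependent_iff]
    intro c hc s0
    obtain ⟨i, j⟩ := s0
    have hj1 : (j : ℕ) + 1 < k i := by have := hk i; have := j.2; omega
    have hpt := congrFun hc (p i ⟨j.1 + 1, hj1⟩)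
    rw [Finset.sum_apply, Pi.zero_apply] at hpt
    have hb : ∀ s : (Σ i : V, Fin (k i - 1)),
        b s (p i ⟨j.1 + 1, hj1⟩)
          = -(if s = (⟨i, j⟩ : Σ i : V, Fin (k i - 1)) then (1:ℝ) else 0) := by
      rintro ⟨u, t⟩
      by_cases hui : u = i
      · subst hui
        simp only [b]
        have h0 : p u ⟨j.1 + 1, hj1⟩ ≠ p u ⟨0, by have := hk u; omega⟩ := by
          intro h
          have := pinj _ h
          simp [Fin.ext_iff] at this
        rw [if_neg h0, zero_sub]
        congr 1
        have hiff : (p u ⟨j.1 + 1, hj1⟩ = p u ⟨(t:ℕ)+1, by have := hk u; have := t.2; omega⟩)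
            ↔ ((⟨u, t⟩ : Σ i : V, Fin (k i - 1)) = ⟨u, j⟩) := by
          constructor
          · intro h
            have := pinj _ h
            have hjt : j = t := by
              rw [Fin.ext_iff] at this ⊢
              simpa using this
            rw [hjt]
          · intro h
            have hjt : t = j := by
              have := (Sigma.mk.inj_iff.mp h).2
              exact heq_iff_eq.mp this
            subst hjt
            rfl
        rw [if_congr hiff rfl rfl]
      · have hne1 : p i ⟨j.1 + 1, hj1⟩ ≠ p u ⟨0, by have := hk u; omega⟩ :=
          pdisj _ _ _ _ (fun h => hui h.symm)
        have hne2 : p i ⟨j.1 + 1, hj1⟩ ≠ p u ⟨(t:ℕ)+1, by have := hk u; have := t.2; omega⟩ :=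
          pdisj _ _ _ _ (fun h => hui h.symm)
        have hne3 : (⟨u, t⟩ : Σ i : V, Fin (k i - 1)) ≠ ⟨i, j⟩ := by
          intro h
          exact hui (congrArg Sigma.fst h)
        simp only [b]
        rw [if_neg hne1, if_neg hne2, if_neg hne3]
        simp
    have key : ∀ s : (Σ i : V, Fin (k i - 1)), (c s • b s) (p i ⟨j.1 + 1, hj1⟩)
        = c s * -(if s = (⟨i, j⟩ : Σ i : V, Fin (k i - 1)) then (1:ℝ) else 0) := by
      intro s
      rw [Pi.smul_apply, smul_eq_mul, hb s]
    rw [Finset.sum_congr rfl (fun s _ => key s)] at hpt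
    simp only [mul_neg, mul_ite, mul_one, mul_zero] at hpt
    rw [Finset.sum_neg_distrib, neg_eq_zero, Finset.sum_ite_eq' Finset.univ _ c] at hpt
    simpa using hpt
  · -- span equals kernel
    apply le_antisymm
    · rw [Submodule.span_le]
      rintro _ ⟨s, rfl⟩
      exact hbker s
    · intro x hx
      rw [LinearMap.mem_ker, mulVecLin_apply, hker] at hx
      obtain ⟨h1, h2⟩ := hx
      have hrep : x = ∑ s : (Σ i : V, Fin (k i - 1)),
          (-(x (p s.1 ⟨(s.2:ℕ)+1, by have := hk s.1; have := s.2.2; omega⟩))) • b s := by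
        funext w
        rw [Finset.sum_apply]
        rcases cov w with ⟨i, rfl⟩ | ⟨i, a, rfl⟩
        · rw [h1]
          symm
          apply Finset.sum_eq_zero
          intro s _
          rw [Pi.smul_apply, smul_eq_mul]
          have hb0 : b s (f i) = 0 := by
            simp only [b]
            rw [if_neg (Ne.symm (pnef _ _ _)), if_neg (Ne.symm (pnef _ _ _)), sub_zero]
          rw [hb0, mul_zero]
        · have key : ∀ s : (Σ i : V, Fin (k i - 1)),
              ((-(x (p s.1 ⟨(s.2:ℕ)+1, by have := hk s.1; have := s.2.2; omega⟩))) • b s) (p i a)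
                = if s.1 = i then
                    -(x (p s.1 ⟨(s.2:ℕ)+1, by have := hk s.1; have := s.2.2; omega⟩)) *
                      ((if (a:ℕ) = 0 then (1:ℝ) else 0) - (if (a:ℕ) = (s.2:ℕ)+1 then 1 else 0))
                  else 0 := by
            rintro ⟨u, t⟩
            rw [Pi.smul_apply, smul_eq_mul]
            simp only [b]
            by_cases hui : u = i
            · subst hui
              rw [if_pos rfl]
              have hiff1 : (p u a = p u ⟨0, by have := hk u; omega⟩) ↔ (a:ℕ) = 0 := by
                constructor
                · intro h
                  have := pinj _ h
                  rw [this]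
                · intro h
                  congr 1
                  exact Fin.ext h
              have hiff2 : (p u a = p u ⟨(t:ℕ)+1, by have := hk u; have := t.2; omega⟩)
                  ↔ (a:ℕ) = (t:ℕ)+1 := by
                constructor
                · intro h
                  have := pinj _ h
                  rw [this]
                · intro h
                  congr 1
                  exact Fin.ext h
              rw [if_congr hiff1 rfl rfl, if_congr hiff2 rfl rfl]
            · rw [if_neg hui, if_neg (pdisj i u _ _ (fun h => hui h.symm)),
                if_neg (pdisj i u _ _ (fun h => hui h.symm))]
              simp
          rw [Finset.sum_congr rfl (fun s _ => key s), ← Finset.univ_sigma_univ,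
            Finset.sum_sigma]
          have e2 : ∀ u : V, (∑ t : Fin (k u - 1), if u = i then
              -(x (p u ⟨(t:ℕ)+1, by have := hk u; have := t.2; omega⟩)) *
                ((if (a:ℕ) = 0 then (1:ℝ) else 0) - (if (a:ℕ) = (t:ℕ)+1 then 1 else 0)) else 0)
              = if u = i then (∑ t : Fin (k u - 1),
                  -(x (p u ⟨(t:ℕ)+1, by have := hk u; have := t.2; omega⟩)) *
                    ((if (a:ℕ) = 0 then (1:ℝ) else 0) - (if (a:ℕ) = (t:ℕ)+1 then 1 else 0)))
                else 0 := by
            intro u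
            split <;> simp
          rw [Finset.sum_congr rfl (fun u _ => e2 u),
            Finset.sum_ite_eq' Finset.univ i _, if_pos (Finset.mem_univ i)]
          by_cases ha : (a:ℕ) = 0
          · have e3 : ∀ t : Fin (k i - 1),
                -(x (p i ⟨(t:ℕ)+1, by have := hk i; have := t.2; omega⟩)) *
                  ((if (a:ℕ) = 0 then (1:ℝ) else 0) - (if (a:ℕ) = (t:ℕ)+1 then 1 else 0))
                = -(x (p i ⟨(t:ℕ)+1, by have := hk i; have := t.2; omega⟩)) := by
              intro t
              rw [if_pos ha, if_neg (by omega), sub_zero, mul_one]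
            rw [Finset.sum_congr rfl (fun t _ => e3 t), Finset.sum_neg_distrib]
            have hs := h2 i
            rw [aux_split (hk i) (fun c : Fin (k i) => x (p i c))] at hs
            have ha3 : a = ⟨0, by have := hk i; omega⟩ := Fin.ext ha
            rw [ha3]
            linarith [hs]
          · have ht0 : (a:ℕ) - 1 < k i - 1 := by have := a.2; omega
            have e3 : ∀ t : Fin (k i - 1),
                -(x (p i ⟨(t:ℕ)+1, by have := hk i; have := t.2; omega⟩)) *
                  ((if (a:ℕ) = 0 then (1:ℝ) else 0) - (if (a:ℕ) = (t:ℕ)+1 then 1 else 0))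
                = if (⟨(a:ℕ)-1, ht0⟩ : Fin (k i - 1)) = t then
                    x (p i ⟨(t:ℕ)+1, by have := hk i; have := t.2; omega⟩) else 0 := by
              intro t
              rw [if_neg ha]
              by_cases hat : (a:ℕ) = (t:ℕ)+1
              · rw [if_pos hat, if_pos (Fin.ext (by simp only [Fin.val_mk]; omega))]
                ring
              · rw [if_neg hat, if_neg (by
                  intro h
                  apply hat
                  have := congrArg Fin.val h
                  simp only [Fin.val_mk] at this
                  omega)]
                ring
            rw [Finset.sum_congr rfl (fun t _ => e3 t),
              Finset.sum_ite_eq Finset.univ _ _, if_pos (Finset.mem_univ _)]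
            exact congrArg (fun c => x (p i c)) (Fin.ext (by simp only [Fin.val_mk]; omega))
      rw [hrep]
      apply Submodule.sum_mem
      intro s _
      exact Submodule.smul_mem _ _ (Submodule.subset_span (Set.mem_range_self s))
end
end

section
/- Let S_1,...,S_k be S-trees with v_i ∈ Supp(S_i), and let T = ⊛_{i=1}^k (S_i,v_i) be their S-coalescence. Then Supp(T) = {v*} ∪ ∪_{i=1}^k (Supp(S_i)\{v_i}), Core(T) = ∪_{i=1}^k Core(S_i), and null(A(T)) = 1 − k + Σ_{i=1}^k null(A(S_i)). -/
open scoped Classical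

open SimpleGraph Matrix

noncomputable section

variable {V : Type*}

/-- `G` is the S-coalescence `⊛ᵢ (S i, v i)`: the vertices `v i` are identified into the single
vertex `vstar`, via the embeddings `g i : V i → W`. -/
structure IsSCoalescence {ι : Type*} {Vf : ι → Type*} [∀ i, Fintype (Vf i)]
    {W : Type*} [Fintype W]
    (S : ∀ i, SimpleGraph (Vf i)) (v : ∀ i, Vf i)
    (G : SimpleGraph W) (g : ∀ i, Vf i → W) (vstar : W) : Prop where
  map_v : ∀ i, g i (v i) = vstar
  inj : ∀ i, Function.Injective (g i)
  disj : ∀ i j a b, i ≠ j → a ≠ v i → b ≠ v j → g i a ≠ g j b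
  cover : ∀ w : W, ∃ i a, g i a = w
  adj_within : ∀ i a b, G.Adj (g i a) (g i b) ↔ (S i).Adj a b
  not_adj_across : ∀ i j a b, i ≠ j → a ≠ v i → b ≠ v j → ¬ G.Adj (g i a) (g j b)

lemma adjMat_symm [Fintype V] (G : SimpleGraph V) (a b : V) : adjMat G a b = adjMat G b a := by
  simp [adjMat, G.adj_comm]

lemma suppSet_exists_eq [Fintype V] (G : SimpleGraph V) {u : V} (hu : u ∈ suppSet G) (c : ℝ) :
    ∃ x : V → ℝ, adjMat G *ᵥ x = 0 ∧ x u = c := by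
  obtain ⟨x, hx, hxu⟩ := hu
  refine ⟨(c / x u) • x, ?_, ?_⟩
  · rw [Matrix.mulVec_smul, hx, smul_zero]
  · simp only [Pi.smul_apply, smul_eq_mul]
    field_simp

lemma mulVec_eq_zero_at [Fintype V] (G : SimpleGraph V) {x : V → ℝ} {u : V} (hu : u ∈ suppSet G)
    (h : ∀ w, w ≠ u → (adjMat G *ᵥ x) w = 0) : (adjMat G *ᵥ x) u = 0 := by
  obtain ⟨z, hz, hzu⟩ := hu
  have key : z ⬝ᵥ (adjMat G *ᵥ x) = 0 := by
    rw [Matrix.dotProduct_mulVec]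
    have : z ᵥ* adjMat G = adjMat G *ᵥ z := by
      ext w
      simp only [Matrix.vecMul, Matrix.mulVec, dotProduct]
      exact Finset.sum_congr rfl fun b _ => by rw [adjMat_symm, mul_comm]
    rw [this, hz, zero_dotProduct]
  have h2 : z ⬝ᵥ (adjMat G *ᵥ x) = z u * (adjMat G *ᵥ x) u := by
    rw [dotProduct]
    exact Finset.sum_eq_single u (fun w _ hw => by rw [h w hw, mul_zero]) (by simp)
  rw [h2] at key
  exact (mul_eq_zero.mp key).resolve_left hzu

lemma sum_subtype_ne {α : Type*} [Fintype α] [DecidableEq α] (v : α) (f : α → ℝ) :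
    ∑ b : {b : α // b ≠ v}, f b.1 = ∑ b, f b - f v := by
  rw [← Finset.sum_erase_eq_sub (Finset.mem_univ v)]
  exact (Finset.sum_subtype (Finset.univ.erase v) (by simp) f).symm

/-- For the S-coalescence `T = ⊛ᵢ (Sᵢ, vᵢ)` of S-trees at supported vertices:
`Supp(T) = {v*} ∪ ⋃ᵢ (Supp(Sᵢ) \ {vᵢ})`, `Core(T) = ⋃ᵢ Core(Sᵢ)`, and
`null(A(T)) = 1 − k + Σᵢ null(A(Sᵢ))`. -/
theorem stmt11 {k : ℕ} (hk : 0 < k) {Vf : Fin k → Type*} [∀ i, Fintype (Vf i)]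
    {W : Type*} [Fintype W]
    (S : ∀ i, SimpleGraph (Vf i)) (v : ∀ i, Vf i)
    (G : SimpleGraph W) (g : ∀ i, Vf i → W) (vstar : W)
    (hS : ∀ i, IsSTree (S i)) (hv : ∀ i, v i ∈ suppSet (S i))
    (hco : IsSCoalescence S v G g vstar) :
    suppSet G = {vstar} ∪ ⋃ i, g i '' (suppSet (S i) \ {v i}) ∧
    coreSet G = ⋃ i, g i '' coreSet (S i) ∧
    (nullity G : ℤ) = 1 - (k : ℤ) + ∑ i, (nullity (S i) : ℤ) := by
  obtain ⟨map_v, inj, disj, cover, adj_within, not_adj_across⟩ := hco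
  set i₀ : Fin k := ⟨0, hk⟩ with hi₀
  -- uniqueness of representation across copies
  have huniq : ∀ i j a b, i ≠ j → g i a = g j b → a = v i ∧ b = v j := by
    intro i j a b hij h
    by_cases ha : a = v i
    · refine ⟨ha, ?_⟩
      subst ha
      rw [map_v i, ← map_v j] at h
      exact (inj j h).symm
    · by_cases hb : b = v j
      · exfalso; subst hb; rw [map_v j, ← map_v i] at h; exact ha (inj i h)
      · exact absurd h (disj i j a b hij ha hb)
  set φ : (Unit ⊕ Σ i : Fin k, {a : Vf i // a ≠ v i}) → W :=
    Sum.elim (fun _ => vstar) (fun p => g p.1 p.2.1) with hφ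
  have hφbij : Function.Bijective φ := by
    constructor
    · rintro (⟨⟩ | ⟨i, a, ha⟩) (⟨⟩ | ⟨j, b, hb⟩) h <;>
        simp only [hφ, Sum.elim_inl, Sum.elim_inr] at h
      · rfl
      · exfalso; rw [← map_v j] at h; exact hb (inj j h).symm
      · exfalso; rw [← map_v i] at h; exact ha (inj i h)
      · by_cases hij : i = j
        · subst hij; obtain rfl := inj i h; rfl
        · exact absurd ((huniq i j a b hij h).1) ha
    · intro w
      obtain ⟨i, a, ha⟩ := cover w
      by_cases h : a = v i
      · exact ⟨Sum.inl ⟨⟩, by rw [hφ]; simp only [Sum.elim_inl]; rw [← ha, h, map_v i]⟩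
      · exact ⟨Sum.inr ⟨i, a, h⟩, ha⟩
  have hsum : ∀ f : W → ℝ,
      ∑ w, f w = f vstar + ∑ j, ((∑ b, f (g j b)) - f (g j (v j))) := by
    intro f
    rw [← Fintype.sum_bijective φ hφbij (fun t => f (φ t)) f (fun _ => rfl)]
    rw [Fintype.sum_sum_type]
    congr 1
    · simp [hφ]
    · rw [← Finset.univ_sigma_univ, Finset.sum_sigma]
      exact Finset.sum_congr rfl fun j _ => by
        simpa [hφ] using sum_subtype_ne (v j) (fun b => f (g j b))
  have hA : ∀ i a b, adjMat G (g i a) (g i b) = adjMat (S i) a b := by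
    intro i a b; simp only [adjMat, Matrix.of_apply, adj_within]
  have hA0 : ∀ i j a b, i ≠ j → a ≠ v i → b ≠ v j → adjMat G (g i a) (g j b) = 0 := by
    intro i j a b hij ha hb
    simp only [adjMat, Matrix.of_apply, if_neg (not_adj_across i j a b hij ha hb)]
  -- mulVec at a non-vstar vertex
  have hmvA : ∀ (x : W → ℝ) (i : Fin k) (a : Vf i), a ≠ v i →
      (adjMat G *ᵥ x) (g i a) = (adjMat (S i) *ᵥ (x ∘ g i)) a := by
    intro x i a ha
    have h1 : (adjMat G *ᵥ x) (g i a) = ∑ w, adjMat G (g i a) w * x w := rfl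
    rw [h1, hsum (fun w => adjMat G (g i a) w * x w)]
    rw [Finset.sum_eq_single i (fun j _ hj => by
      rw [Finset.sum_eq_single (v j) (fun b _ hb =>
        by rw [hA0 i j a b (Ne.symm hj) ha hb, zero_mul]) (by simp), sub_self])
      (by simp)]
    rw [← map_v i]
    simp only [hA, Function.comp_apply]
    have h2 : (adjMat (S i) *ᵥ (x ∘ g i)) a = ∑ b, adjMat (S i) a b * x (g i b) := rfl
    rw [h2]; ring
  -- mulVec at vstar
  have hmvB : ∀ (x : W → ℝ),
      (adjMat G *ᵥ x) vstar = ∑ i, (adjMat (S i) *ᵥ (x ∘ g i)) (v i) := by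
    intro x
    have h1 : (adjMat G *ᵥ x) vstar = ∑ w, adjMat G vstar w * x w := rfl
    rw [h1, hsum (fun w => adjMat G vstar w * x w)]
    have hdiag : adjMat G vstar vstar = 0 := by simp [adjMat]
    rw [hdiag, zero_mul, zero_add]
    refine Finset.sum_congr rfl fun j _ => ?_
    rw [← map_v j]
    simp only [hA, Function.comp_apply]
    have hd : adjMat (S j) (v j) (v j) = 0 := by simp [adjMat]
    rw [hd, zero_mul, sub_zero]
    rfl
  -- kernel characterization
  have hkerW : ∀ x : W → ℝ, adjMat G *ᵥ x = 0 ↔ ∀ i, adjMat (S i) *ᵥ (x ∘ g i) = 0 := by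
    intro x
    constructor
    · intro hx i
      funext a
      show (adjMat (S i) *ᵥ (x ∘ g i)) a = 0
      by_cases ha : a = v i
      · subst ha
        refine mulVec_eq_zero_at (S i) (hv i) fun b hb => ?_
        rw [← hmvA x i b hb, hx]; rfl
      · rw [← hmvA x i a ha, hx]; rfl
    · intro h
      funext w
      show (adjMat G *ᵥ x) w = 0
      obtain ⟨t, rfl⟩ := hφbij.2 w
      rcases t with ⟨⟩ | ⟨i, a, ha⟩
      · show (adjMat G *ᵥ x) vstar = 0
        rw [hmvB]
        exact Finset.sum_eq_zero fun i _ => by rw [h i]; rfl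
      · show (adjMat G *ᵥ x) (g i a) = 0
        rw [hmvA x i a ha, h i]; rfl
  -- gluing
  have hglue : ∀ (y : ∀ i, Vf i → ℝ), (∀ i, y i (v i) = y i₀ (v i₀)) →
      ∃ x : W → ℝ, ∀ i, x ∘ g i = y i := by
    intro y hy
    refine ⟨fun w => Sum.elim (fun _ => y i₀ (v i₀)) (fun p => y p.1 p.2.1)
      ((Equiv.ofBijective φ hφbij).symm w), fun i => ?_⟩
    funext a
    by_cases ha : a = v i
    · subst ha
      have he : (Equiv.ofBijective φ hφbij).symm (g i (v i)) = Sum.inl ⟨⟩ := by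
        rw [Equiv.symm_apply_eq]
        show g i (v i) = φ (Sum.inl ⟨⟩)
        rw [map_v i]; rfl
      show Sum.elim _ _ ((Equiv.ofBijective φ hφbij).symm (g i (v i))) = y i (v i)
      rw [he, Sum.elim_inl, hy i]
    · have he : (Equiv.ofBijective φ hφbij).symm (g i a) = Sum.inr ⟨i, a, ha⟩ := by
        rw [Equiv.symm_apply_eq]; rfl
      show Sum.elim _ _ ((Equiv.ofBijective φ hφbij).symm (g i a)) = y i a
      rw [he, Sum.elim_inr]
  -- support description
  have hsupp : suppSet G = {vstar} ∪ ⋃ i, g i '' (suppSet (S i) \ {v i}) := by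
    ext w
    constructor
    · rintro ⟨x, hx, hxw⟩
      obtain ⟨t, rfl⟩ := hφbij.2 w
      rcases t with ⟨⟩ | ⟨i, a, ha⟩
      · exact Or.inl rfl
      · right
        exact Set.mem_iUnion.mpr ⟨i, ⟨a, ⟨⟨x ∘ g i, (hkerW x).1 hx i, hxw⟩, ha⟩, rfl⟩⟩
    · rintro (hw | hw)
      · obtain rfl : w = vstar := hw
        choose y hy1 hy2 using fun i => suppSet_exists_eq (S i) (hv i) 1
        obtain ⟨x, hx⟩ := hglue y (fun i => by rw [hy2, hy2])
        refine ⟨x, (hkerW x).2 (fun i => by rw [hx i]; exact hy1 i), ?_⟩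
        have hx0 : x (g i₀ (v i₀)) = 1 := (congrFun (hx i₀) (v i₀)).trans (hy2 i₀)
        rw [← map_v i₀, hx0]; norm_num
      · obtain ⟨i, a, ⟨haS, hav⟩, rfl⟩ := Set.mem_iUnion.mp hw
        replace hav : a ≠ v i := hav
        obtain ⟨z, hz, hza⟩ := haS
        choose y hy1 hy2 using fun j => suppSet_exists_eq (S j) (hv j) (z (v i))
        set y' : ∀ j, Vf j → ℝ := Function.update y i z with hy'
        have hy'i : y' i = z := Function.update_self i z y
        have hy'ker : ∀ j, adjMat (S j) *ᵥ y' j = 0 := by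
          intro j
          by_cases hj : j = i
          · subst hj; rw [hy'i]; exact hz
          · rw [hy', Function.update_of_ne hj]; exact hy1 j
        have hy'val : ∀ j, y' j (v j) = z (v i) := by
          intro j
          by_cases hj : j = i
          · subst hj; rw [hy'i]
          · rw [hy', Function.update_of_ne hj]; exact hy2 j
        obtain ⟨x, hx⟩ := hglue y' (fun j => by rw [hy'val, hy'val])
        refine ⟨x, (hkerW x).2 (fun j => by rw [hx j]; exact hy'ker j), ?_⟩
        have : x (g i a) = z a := by
          have := congrFun (hx i) a; rw [hy'i] at this; exact this
        rw [this]; exact hza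
  have hφ1 : ∀ u : Unit, φ (Sum.inl u) = vstar := fun _ => rfl
  have hφ2 : ∀ p : Σ i : Fin k, {a : Vf i // a ≠ v i}, φ (Sum.inr p) = g p.1 p.2.1 :=
    fun _ => rfl
  -- core description
  have hcore : coreSet G = ⋃ i, g i '' coreSet (S i) := by
    ext w
    constructor
    · rintro ⟨u, hu, huw⟩
      rw [hsupp] at hu
      obtain ⟨t, rfl⟩ := hφbij.2 w
      rcases hu with hu | hu
      · obtain rfl : u = vstar := hu
        rcases t with ⟨u'⟩ | ⟨j, b, hb⟩
        · rw [hφ1 u'] at huw; exact absurd huw (G.loopless.irrefl _)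
        · rw [hφ2 ⟨j, b, hb⟩] at huw ⊢
          rw [← map_v j] at huw
          have hadj : (S j).Adj (v j) b := (adj_within j (v j) b).mp huw
          exact Set.mem_iUnion.mpr ⟨j, ⟨b, ⟨v j, hv j, hadj⟩, rfl⟩⟩
      · obtain ⟨i, a, ⟨haS, hav⟩, rfl⟩ := Set.mem_iUnion.mp hu
        replace hav : a ≠ v i := hav
        rcases t with ⟨u'⟩ | ⟨j, b, hb⟩
        · rw [hφ1 u'] at huw ⊢
          rw [← map_v i] at huw ⊢
          have hadj : (S i).Adj a (v i) := (adj_within i a (v i)).mp huw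
          exact Set.mem_iUnion.mpr ⟨i, ⟨v i, ⟨a, haS, hadj⟩, rfl⟩⟩
        · rw [hφ2 ⟨j, b, hb⟩] at huw ⊢
          by_cases hij : i = j
          · subst hij
            have hadj : (S i).Adj a b := (adj_within i a b).mp huw
            exact Set.mem_iUnion.mpr ⟨i, ⟨b, ⟨a, haS, hadj⟩, rfl⟩⟩
          · exact absurd huw (not_adj_across i j a b hij hav hb)
    · intro hw
      obtain ⟨i, c, hc, rfl⟩ := Set.mem_iUnion.mp hw
      obtain ⟨u, huS, huc⟩ := hc
      by_cases hu : u = v i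
      · subst hu
        refine ⟨vstar, by rw [hsupp]; exact Or.inl rfl, ?_⟩
        rw [← map_v i]
        exact (adj_within i (v i) c).mpr huc
      · refine ⟨g i u, ?_, (adj_within i u c).mpr huc⟩
        rw [hsupp]
        exact Or.inr (Set.mem_iUnion.mpr ⟨i, ⟨u, ⟨huS, hu⟩, rfl⟩⟩)
  refine ⟨hsupp, hcore, ?_⟩
  -- nullity computation
  let F : LinearMap.ker (adjMat G).mulVecLin →ₗ[ℝ]
      (∀ i, LinearMap.ker (adjMat (S i)).mulVecLin) :=
    { toFun := fun x i => ⟨(x : W → ℝ) ∘ g i, by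
        rw [LinearMap.mem_ker, Matrix.mulVecLin_apply]
        exact (hkerW (x : W → ℝ)).1
          (by have h := LinearMap.mem_ker.mp x.2; rwa [Matrix.mulVecLin_apply] at h) i⟩
      map_add' := fun x y => rfl
      map_smul' := fun c x => rfl }
  let ev : (∀ i, LinearMap.ker (adjMat (S i)).mulVecLin) →ₗ[ℝ] (Fin k → ℝ) :=
    { toFun := fun y i => (y i : Vf i → ℝ) (v i)
      map_add' := fun x y => rfl
      map_smul' := fun c x => rfl }
  let q : (Fin k → ℝ) →ₗ[ℝ] (Fin k → ℝ) :=
    { toFun := fun c j => c j - c i₀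
      map_add' := fun c d => by funext j; simp; ring
      map_smul' := fun r c => by funext j; simp; ring }
  have hFinj : Function.Injective F := by
    intro x x' h
    have hcomp : ∀ i, (x : W → ℝ) ∘ g i = (x' : W → ℝ) ∘ g i := by
      intro i
      exact congrArg Subtype.val (congrFun h i)
    apply Subtype.ext
    funext w
    obtain ⟨t, rfl⟩ := hφbij.2 w
    rcases t with ⟨u'⟩ | ⟨i, a, ha⟩
    · rw [hφ1 u', ← map_v i₀]
      exact congrFun (hcomp i₀) (v i₀)
    · rw [hφ2 ⟨i, a, ha⟩]
      exact congrFun (hcomp i) a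
  have hrange : LinearMap.range F = LinearMap.ker (q.comp ev) := by
    ext y
    constructor
    · rintro ⟨x, rfl⟩
      rw [LinearMap.mem_ker]
      funext j
      show (x : W → ℝ) (g j (v j)) - (x : W → ℝ) (g i₀ (v i₀)) = 0
      rw [map_v j, map_v i₀, sub_self]
    · intro hy
      have hvals : ∀ j, (y j : Vf j → ℝ) (v j) = (y i₀ : Vf i₀ → ℝ) (v i₀) := by
        intro j
        have h2 : (y j : Vf j → ℝ) (v j) - (y i₀ : Vf i₀ → ℝ) (v i₀) = 0 :=
          congrFun (LinearMap.mem_ker.mp hy) j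
        linarith
      obtain ⟨x, hx⟩ := hglue (fun i => (y i : Vf i → ℝ)) hvals
      have hxker : adjMat G *ᵥ x = 0 := (hkerW x).2 (fun i => by
        rw [hx i]
        have h := LinearMap.mem_ker.mp (y i).2
        rwa [Matrix.mulVecLin_apply] at h)
      refine ⟨⟨x, by rw [LinearMap.mem_ker, Matrix.mulVecLin_apply]; exact hxker⟩, ?_⟩
      exact funext fun i => Subtype.ext (hx i)
  have hev : Function.Surjective ev := by
    intro c
    choose z hz1 hz2 using fun i => suppSet_exists_eq (S i) (hv i) (c i)
    exact ⟨fun i => ⟨z i, by rw [LinearMap.mem_ker, Matrix.mulVecLin_apply]; exact hz1 i⟩,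
      funext fun i => hz2 i⟩
  have hq : LinearMap.range q = LinearMap.ker (LinearMap.proj i₀ : (Fin k → ℝ) →ₗ[ℝ] ℝ) := by
    ext c
    constructor
    · rintro ⟨d, rfl⟩
      show d i₀ - d i₀ = 0
      ring
    · intro hc
      have hc0 : c i₀ = 0 := hc
      exact ⟨c, funext fun j => by show c j - c i₀ = c j; rw [hc0, sub_zero]⟩
  have e1 : Module.finrank ℝ (LinearMap.range (q.comp ev)) +
      Module.finrank ℝ (LinearMap.ker (q.comp ev)) = ∑ i, nullity (S i) := by
    rw [LinearMap.finrank_range_add_finrank_ker (q.comp ev)]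
    exact Module.finrank_pi_fintype ℝ
  have e2 : Module.finrank ℝ (LinearMap.ker (q.comp ev)) = nullity G := by
    rw [← hrange, LinearMap.finrank_range_of_inj hFinj]
    rfl
  have e3 : Module.finrank ℝ (LinearMap.range (q.comp ev)) + 1 = k := by
    have hr : LinearMap.range (q.comp ev) = LinearMap.range q := by
      rw [LinearMap.range_comp, LinearMap.range_eq_top.mpr hev, Submodule.map_top]
    rw [hr, hq]
    have hps : Function.Surjective (LinearMap.proj i₀ : (Fin k → ℝ) →ₗ[ℝ] ℝ) :=
      fun r => ⟨fun _ => r, rfl⟩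
    have h4 := LinearMap.finrank_range_add_finrank_ker
      (LinearMap.proj i₀ : (Fin k → ℝ) →ₗ[ℝ] ℝ)
    rw [LinearMap.range_eq_top.mpr hps, finrank_top, Module.finrank_self,
      Module.finrank_fintype_fun_eq_card, Fintype.card_fin] at h4
    omega
  have hZ : ((∑ i, nullity (S i) : ℕ) : ℤ) = ∑ i, (nullity (S i) : ℤ) := by push_cast; rfl
  rw [← hZ]
  omega
end
end

section
/- Let A be an S-atom and let Δ_core(A) be the maximum degree among core vertices of A. Then null(A(A)) ≥ Δ_core(A) − 1. -/
open scoped Classical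

open SimpleGraph Matrix

noncomputable section

variable {V : Type*}

/-- The graph with vertex `u` isolated. -/
def delV (S : SimpleGraph V) (u : V) : SimpleGraph V where
  Adj a b := S.Adj a b ∧ a ≠ u ∧ b ≠ u
  symm := ⟨fun a b h => ⟨h.1.symm, h.2.2, h.2.1⟩⟩
  loopless := ⟨fun a h => @Std.Irrefl.irrefl _ _ S.loopless a h.1⟩

lemma delV_le (S : SimpleGraph V) (u : V) : delV S u ≤ S := fun _ _ h => h.1

lemma not_reach_u {S : SimpleGraph V} {u w : V} (h : (delV S u).Reachable u w) : w = u := by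
  obtain ⟨p⟩ := h
  cases p with
  | nil => rfl
  | cons h q => exact absurd rfl h.2.1

lemma delV_support {S : SimpleGraph V} {u a b : V} (p : (delV S u).Walk a b) :
    ∀ w ∈ p.support, w = a ∨ w ≠ u := by
  induction p with
  | nil => simp
  | cons h q ih =>
    intro w hw
    rw [SimpleGraph.Walk.support_cons] at hw
    rcases List.mem_cons.mp hw with rfl | hw
    · exact Or.inl rfl
    · rcases ih w hw with rfl | h' 
      · exact Or.inr h.2.2
      · exact Or.inr h'

lemma sep {S : SimpleGraph V} (hac : S.IsAcyclic) {u vi vj : V} (hi : S.Adj u vi)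
    (hj : S.Adj u vj) (hne : vi ≠ vj) : ¬ (delV S u).Reachable vi vj := by
  intro h
  obtain ⟨p0⟩ := h
  let p : (delV S u).Walk vi vj := p0.toPath
  have hp : p.IsPath := p0.toPath.2
  have hedges : ∀ e ∈ p.edges, e ∈ S.edgeSet := fun e he =>
    (SimpleGraph.edgeSet_subset_edgeSet.mpr (delV_le S u)) (p.edges_subset_edgeSet he)
  let q : S.Walk vi vj := p.transfer S hedges
  have hq : q.IsPath := hp.transfer hedges
  have husupp : u ∉ q.support := by
    intro hmem
    rw [SimpleGraph.Walk.support_transfer] at hmem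
    rcases delV_support p u hmem with rfl | h'
    · exact hi.ne rfl
    · exact h' rfl
  have hP2 : (SimpleGraph.Walk.cons hi q).IsPath := by
    rw [SimpleGraph.Walk.cons_isPath_iff]; exact ⟨hq, husupp⟩
  have := SimpleGraph.isAcyclic_iff_path_unique.mp hac (SimpleGraph.Path.singleton hj) ⟨_, hP2⟩
  have hlen := congrArg (fun r : S.Path u vj => (r : S.Walk u vj).length) this
  simp [SimpleGraph.Path.singleton] at hlen
  exact hne hlen.eq

lemma core_deg_le [Fintype V] (S : SimpleGraph V) (hS : IsSTree S)
    (hatom : ∀ a b, S.Adj a b → ¬(a ∈ coreSet S ∧ b ∈ coreSet S)) {u : V}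
    (hu : u ∈ coreSet S) : (S.neighborSet u).ncard ≤ nullity S + 1 := by
  have hac : S.IsAcyclic := hS.1.2
  -- u is not in the support
  have hu_nsupp : u ∉ suppSet S := by
    intro hus
    obtain ⟨w, hw, hwu⟩ := id hu
    exact hatom u w hwu.symm ⟨hu, ⟨u, hus, hwu.symm⟩⟩
  have hker_u : ∀ x : V → ℝ, adjMat S *ᵥ x = 0 → x u = 0 := by
    intro x hx
    by_contra h
    exact hu_nsupp ⟨x, hx, h⟩
  -- all neighbors of u are support vertices
  have hnb_supp : ∀ w ∈ S.neighborSet u, w ∈ suppSet S := by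
    intro w hw
    have hwc : w ∉ coreSet S := fun hc => hatom u w hw ⟨hu, hc⟩
    have : w ∈ suppSet S ∪ coreSet S := hS.2 ▸ Set.mem_univ w
    rcases this with h1 | h1
    · exact h1
    · exact absurd h1 hwc
  cases h : (S.neighborSet u).ncard with
  | zero => omega
  | succ j =>
  have hcard : Fintype.card ↥(S.neighborSet u) = j + 1 := by
    rw [← h, Set.ncard_eq_toFinset_card', Set.toFinset_card]
  set e : Fin (j + 1) ≃ ↥(S.neighborSet u) := (Fintype.equivFinOfCardEq hcard).symm with he
  set v : Fin (j + 1) → V := fun i => (e i : V) with hv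
  have hadj : ∀ i, S.Adj u (v i) := fun i => (e i).2
  have hvu : ∀ i, v i ≠ u := fun i => (hadj i).ne'
  have hvinj : Function.Injective v := fun i k hik =>
    e.injective (Subtype.ext hik)
  have hsupp : ∀ i, ∃ x : V → ℝ, adjMat S *ᵥ x = 0 ∧ x (v i) ≠ 0 := fun i =>
    hnb_supp (v i) (e i).2
  choose x hx0 hxv using hsupp
  set c : Fin (j + 1) → ℝ := fun i => x i (v i) with hc
  set y : Fin (j + 1) → V → ℝ :=
    fun i w => if (delV S u).Reachable (v i) w then x i w else 0 with hy
  have hyu : ∀ i, y i u = 0 := by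
    intro i
    have : ¬ (delV S u).Reachable (v i) u := fun hr => hvu i (not_reach_u hr.symm ▸ rfl)
    simp only [hy]
    rw [if_neg this]
  have hyvij : ∀ i k, i ≠ k → y i (v k) = 0 := by
    intro i k hik
    have : ¬ (delV S u).Reachable (v i) (v k) :=
      sep hac (hadj i) (hadj k) (fun hh => hik (hvinj hh))
    simp only [hy]
    rw [if_neg this]
  have hyvii : ∀ i, y i (v i) = c i := by
    intro i
    simp only [hy, hc]
    rw [if_pos (SimpleGraph.Reachable.refl _)]
  -- the key computation
  have hAy : ∀ i, adjMat S *ᵥ y i = fun w => if w = u then c i else 0 := by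
    intro i
    funext w
    show ∑ w', adjMat S w w' * y i w' = _
    by_cases hw : w = u
    · rw [hw, if_pos rfl]
      rw [Finset.sum_eq_single_of_mem (v i) (Finset.mem_univ _)]
      · simp only [adjMat, Matrix.of_apply]
        rw [if_pos (hadj i), hyvii i, one_mul]
      · intro b _ hb
        by_cases hub : S.Adj u b
        · have : ¬ (delV S u).Reachable (v i) b :=
            sep hac (hadj i) hub (fun hh => hb hh.symm)
          simp only [hy]
          rw [if_neg this, mul_zero]
        · simp only [adjMat, Matrix.of_apply]
          rw [if_neg hub, zero_mul]
    · rw [if_neg hw]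
      by_cases hr : (delV S u).Reachable (v i) w
      · have : ∑ w', adjMat S w w' * y i w' = ∑ w', adjMat S w w' * x i w' := by
          refine Finset.sum_congr rfl fun w' _ => ?_
          by_cases haw : S.Adj w w'
          · congr 1
            by_cases hw'u : w' = u
            · subst hw'u
              rw [hyu i, hker_u (x i) (hx0 i)]
            · have : (delV S u).Reachable (v i) w' :=
                hr.trans (SimpleGraph.Adj.reachable ⟨haw, hw, hw'u⟩)
              simp only [hy]
              rw [if_pos this]
          · simp only [adjMat, Matrix.of_apply]
            rw [if_neg haw, zero_mul, zero_mul]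
        rw [this]
        have := congrFun (hx0 i) w
        simpa [Matrix.mulVec, dotProduct] using this
      · refine Finset.sum_eq_zero fun w' _ => ?_
        by_cases haw : S.Adj w w'
        · have hyw' : y i w' = 0 := by
            by_cases hw'u : w' = u
            · subst hw'u; exact hyu i
            · have : ¬ (delV S u).Reachable (v i) w' := fun hrr =>
                hr (hrr.trans (SimpleGraph.Adj.reachable ⟨haw.symm, hw'u, hw⟩))
              simp only [hy]
              rw [if_neg this]
          rw [hyw', mul_zero]
        · simp only [adjMat, Matrix.of_apply]
          rw [if_neg haw, zero_mul]
  have hcne : ∀ i, c i ≠ 0 := hxv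
  set z : Fin j → V → ℝ := fun i =>
    (c i.castSucc)⁻¹ • y i.castSucc - (c (Fin.last j))⁻¹ • y (Fin.last j) with hz
  have hzker : ∀ i, adjMat S *ᵥ z i = 0 := by
    intro i
    simp only [hz]
    rw [Matrix.mulVec_sub, Matrix.mulVec_smul, Matrix.mulVec_smul, hAy, hAy]
    funext w
    by_cases hw : w = u
    · subst hw
      simp [inv_mul_cancel₀ (hcne i.castSucc), inv_mul_cancel₀ (hcne (Fin.last j))]
    · simp [hw]
  have hzeval : ∀ i k : Fin j, z i (v k.castSucc) = if i = k then 1 else 0 := by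
    intro i k
    have hlast : (Fin.last j) ≠ k.castSucc := (Fin.castSucc_lt_last k).ne'
    simp only [hz, Pi.sub_apply, Pi.smul_apply, smul_eq_mul]
    rw [hyvij _ _ hlast, mul_zero, sub_zero]
    by_cases hik : i = k
    · subst hik
      rw [hyvii, inv_mul_cancel₀ (hcne i.castSucc), if_pos rfl]
    · rw [hyvij _ _ (fun hh => hik (Fin.castSucc_injective j hh)), mul_zero, if_neg hik]
  have hzmem : ∀ i, z i ∈ LinearMap.ker (adjMat S).mulVecLin := by
    intro i
    rw [LinearMap.mem_ker, Matrix.mulVecLin_apply]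
    exact hzker i
  set z' : Fin j → ↥(LinearMap.ker (adjMat S).mulVecLin) := fun i => ⟨z i, hzmem i⟩ with hz'
  have hli : LinearIndependent ℝ z := by
    rw [Fintype.linearIndependent_iff]
    intro g hg k
    have := congrFun hg (v k.castSucc)
    simp only [Finset.sum_apply, Pi.smul_apply, smul_eq_mul, Pi.zero_apply] at this
    rw [Finset.sum_congr rfl (fun i _ => by rw [hzeval i k])] at this
    simpa using this
  have hli' : LinearIndependent ℝ z' := by
    apply LinearIndependent.of_comp (LinearMap.ker (adjMat S).mulVecLin).subtype
    exact hli
  have hcount : j ≤ nullity S := by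
    have := LinearIndependent.fintype_card_le_finrank hli'
    simpa [nullity] using this
  omega

/-- For an S-atom `A`, `null(A(A)) ≥ Δ_core(A) − 1`, where `Δ_core(A)` is the maximum degree
among core vertices. -/
theorem stmt16 [Fintype V] (S : SimpleGraph V) (hS : IsSTree S)
    (hatom : ∀ a b, S.Adj a b → ¬(a ∈ coreSet S ∧ b ∈ coreSet S)) :
    sSup {d | ∃ u ∈ coreSet S, (S.neighborSet u).ncard = d} - 1 ≤ nullity S := by
  have key : ∀ d ∈ {d | ∃ u ∈ coreSet S, (S.neighborSet u).ncard = d}, d ≤ nullity S + 1 := by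
    rintro d ⟨u, hu, rfl⟩
    exact core_deg_le S hS hatom hu
  have := csSup_le' key
  omega
end
end
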